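/- arXiv:2209.08304 — 5 statements merged into one kernel-verified Lean document; each statement's English description precedes it below -/
import Mathlib

section
/- Let U ⊆ ℝ^m be open, Q ∈ ℝ with Q ≠ 2, and let ψ be a smooth strictly positive function on U satisfying Δψ = (Q−1)·|∇ψ|²/ψ on U. Then for every f ∈ C_c^∞(U) the Hardy inequality ∫_U (|∇ψ|²/ψ²)·f² dx ≤ (2/(Q−2))²·∫_U |∇f|² dx holds. -/
open Real MeasureTheory

/-- Gluing: smooth on open `U`, zero off a closed `K ⊆ U`, hence globally smooth. -/
lemma glue_contDiff {E : Type*} [NormedAddCommGroup E] [NormedSpace ℝ E]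
    {N : WithTop ℕ∞} {U K : Set E} (hU : IsOpen U) (hK : IsClosed K) (hKU : K ⊆ U)
    {F : E → ℝ} (h1 : ContDiffOn ℝ N F U) (h0 : ∀ x ∉ K, F x = 0) :
    ContDiff ℝ N F := by
  rw [contDiff_iff_contDiffAt]
  intro x
  by_cases hx : x ∈ U
  · exact (h1 x hx).contDiffAt (hU.mem_nhds hx)
  · have hmem : Kᶜ ∈ nhds x := hK.isOpen_compl.mem_nhds fun h => hx (hKU h)
    have hev : F =ᶠ[nhds x] (fun _ => 0) := by
      filter_upwards [hmem] with y hy using h0 y hy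
    exact (contDiffAt_const (c := (0:ℝ))).congr_of_eventuallyEq hev

/-- Divergence theorem for compactly supported `C¹` families on `ℝⁿ⁺¹` (pi version). -/
lemma integral_div_pi {n : ℕ} (G : Fin (n+1) → (Fin (n+1) → ℝ) → ℝ)
    (hG : ∀ i, ContDiff ℝ 1 (G i)) (hGs : ∀ i, HasCompactSupport (G i)) :
    ∫ x : Fin (n+1) → ℝ, ∑ i, fderiv ℝ (G i) x (Pi.single i 1) = 0 := by
  obtain ⟨R, hR⟩ := (isCompact_iUnion fun i => (hGs i)).isBounded.subset_closedBall 0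
  set R' : ℝ := max R 0 + 1 with hR'
  have hR'pos : (0:ℝ) < R' := by positivity
  set a : Fin (n+1) → ℝ := fun _ => -R' with ha
  set b : Fin (n+1) → ℝ := fun _ => R' with hb
  have hab : a ≤ b := fun i => by simp [ha, hb]; linarith
  have hfd0 : ∀ i, ∀ x ∉ tsupport (G i), fderiv ℝ (G i) x = 0 := by
    intro i x hx
    by_contra h
    exact hx (support_fderiv_subset ℝ (f := G i) h)
  have hsub : ∀ i, tsupport (G i) ⊆ Metric.closedBall 0 (max R 0) := by
    intro i
    refine (Set.subset_iUnion (fun j => tsupport (G j)) i).trans (hR.trans ?_)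
    exact Metric.closedBall_subset_closedBall (le_max_left _ _)
  have hout : ∀ (x : Fin (n+1) → ℝ) i, max R 0 < |x i| → ∀ j, x ∉ tsupport (G j) := by
    intro x i hxi j hx
    have h1 : ‖x‖ ≤ max R 0 := by
      have := hsub j hx
      simpa [Metric.mem_closedBall, dist_zero_right] using this
    exact absurd ((norm_le_pi_norm x i).trans h1) (by simpa using hxi.not_ge)
  have key := integral_divergence_of_hasFDerivAt_off_countable' a b hab G
      (fun i x => fderiv ℝ (G i) x) ∅ Set.countable_empty
      (fun i => ((hG i).continuous).continuousOn)
      (fun x _ i => ((hG i).differentiable one_ne_zero x).hasFDerivAt)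
      (by
        apply Integrable.integrableOn
        apply Continuous.integrable_of_hasCompactSupport
        · exact continuous_finset_sum _ fun i _ =>
            (ContinuousLinearMap.apply ℝ ℝ (Pi.single i 1)).continuous.comp
              ((hG i).continuous_fderiv one_ne_zero)
        · apply HasCompactSupport.intro (isCompact_iUnion fun i => (hGs i))
          intro x hx
          have : ∀ i, x ∉ tsupport (G i) := fun i hi =>
            hx (Set.mem_iUnion.2 ⟨i, hi⟩)
          exact Finset.sum_eq_zero fun i _ => by simp [hfd0 i x (this i)])
  have hbdry : ∀ (i : Fin (n+1)) (c : ℝ), max R 0 < |c| →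
      ∀ y : Fin n → ℝ, G i (i.insertNth c y) = 0 := by
    intro i c hc y
    exact image_eq_zero_of_notMem_tsupport
      (hout _ i (by rwa [Fin.insertNth_apply_same]) i)
  rw [show (∑ i : Fin (n+1),
        ((∫ (x : Fin n → ℝ) in Set.Icc (a ∘ i.succAbove) (b ∘ i.succAbove),
            G i (i.insertNth (b i) x)) -
          ∫ (x : Fin n → ℝ) in Set.Icc (a ∘ i.succAbove) (b ∘ i.succAbove),
            G i (i.insertNth (a i) x)) ) = 0 from
    Finset.sum_eq_zero fun i _ => by
      rw [integral_congr_ae (Filter.Eventually.of_forall fun y =>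
            hbdry i (b i) (by show R ⊔ 0 < |R'|; rw [abs_of_pos hR'pos]; simp [hR']) y),
          integral_congr_ae (Filter.Eventually.of_forall fun y =>
            hbdry i (a i) (by
              show R ⊔ 0 < |(- R')|
              rw [abs_neg, abs_of_pos hR'pos]; simp [hR']) y)]
      simp] at key
  rw [← key]
  symm
  apply setIntegral_eq_integral_of_forall_compl_eq_zero
  intro x hx
  have hxout : ∃ i, max R 0 < |x i| := by
    by_contra h
    push_neg at h
    exact hx (Set.mem_Icc.2 ⟨fun i => by have := (abs_le.1 (h i)).1; simp [ha]; linarith,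
      fun i => by have := (abs_le.1 (h i)).2; simp [hb]; linarith⟩)
  obtain ⟨i, hi⟩ := hxout
  exact Finset.sum_eq_zero fun j _ => by simp [hfd0 j x (hout x i hi j)]

/-- Divergence theorem for compactly supported `C¹` families on Euclidean space. -/
lemma integral_div_euc {n : ℕ} (g : Fin (n+1) → EuclideanSpace ℝ (Fin (n+1)) → ℝ)
    (hg : ∀ i, ContDiff ℝ 1 (g i)) (hgs : ∀ i, HasCompactSupport (g i)) :
    ∫ x : EuclideanSpace ℝ (Fin (n+1)),
      ∑ i, fderiv ℝ (g i) x (EuclideanSpace.single i 1) = 0 := by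
  set eL := EuclideanSpace.equiv (Fin (n+1)) ℝ with heL
  have h1 : ∀ i, ContDiff ℝ 1 (g i ∘ eL.symm) := fun i => (hg i).comp eL.symm.contDiff
  have h2 : ∀ i, HasCompactSupport (g i ∘ eL.symm) := fun i =>
    (hgs i).comp_homeomorph eL.symm.toHomeomorph
  have h3 : ∀ i y, fderiv ℝ (g i ∘ eL.symm) y (Pi.single i 1)
      = fderiv ℝ (g i) (eL.symm y) (EuclideanSpace.single i 1) := by
    intro i y
    rw [fderiv_comp y ((hg i).differentiable one_ne_zero _) eL.symm.differentiableAt,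
      eL.symm.fderiv]
    rfl
  have hmp := (EuclideanSpace.volume_preserving_symm_measurableEquiv_toLp (Fin (n+1))).symm
  have htrans :
      ∫ y : Fin (n+1) → ℝ,
        (fun x : EuclideanSpace ℝ (Fin (n+1)) =>
          ∑ i, fderiv ℝ (g i) x (EuclideanSpace.single i 1))
          ((MeasurableEquiv.toLp 2 (Fin (n+1) → ℝ)) y)
      = ∫ x : EuclideanSpace ℝ (Fin (n+1)),
          ∑ i, fderiv ℝ (g i) x (EuclideanSpace.single i 1) :=
    hmp.integral_comp (MeasurableEquiv.measurableEmbedding _)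
      (fun x => ∑ i, fderiv ℝ (g i) x (EuclideanSpace.single i 1))
  rw [← htrans]
  have hid : ∀ y : Fin (n+1) → ℝ,
      ((MeasurableEquiv.toLp 2 (Fin (n+1) → ℝ)) y) = eL.symm y := fun _ => rfl
  calc ∫ y : Fin (n+1) → ℝ, (fun x : EuclideanSpace ℝ (Fin (n+1)) =>
          ∑ i, fderiv ℝ (g i) x (EuclideanSpace.single i 1))
          ((MeasurableEquiv.toLp 2 (Fin (n+1) → ℝ)) y)
      = ∫ y : Fin (n+1) → ℝ, ∑ i, fderiv ℝ (g i ∘ eL.symm) y (Pi.single i 1) := by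
        refine integral_congr_ae (Filter.Eventually.of_forall fun y => ?_)
        simp only [hid, h3]
    _ = 0 := integral_div_pi _ h1 h2

lemma inner_gradient_apply {m : ℕ} (h : EuclideanSpace ℝ (Fin m) → ℝ)
    (x v : EuclideanSpace ℝ (Fin m)) :
    (inner ℝ (gradient h x) v : ℝ) = fderiv ℝ h x v := by
  rw [show gradient h x = (InnerProductSpace.toDual ℝ _).symm (fderiv ℝ h x) from rfl,
    ← InnerProductSpace.toDual_apply_apply, LinearIsometryEquiv.apply_symm_apply]

lemma fderiv_single_eq {m : ℕ} (h : EuclideanSpace ℝ (Fin m) → ℝ)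
    (x : EuclideanSpace ℝ (Fin m)) (i : Fin m) :
    fderiv ℝ h x (EuclideanSpace.single i 1) = gradient h x i := by
  rw [← inner_gradient_apply, EuclideanSpace.inner_single_right]
  simp

lemma sum_mul_coords {m : ℕ} (v w : EuclideanSpace ℝ (Fin m)) :
    ∑ i, v i * w i = (inner ℝ v w : ℝ) := by
  rw [PiLp.inner_apply]
  simp [mul_comm]

/-- gradient vanishes off the topological support. -/
lemma gradient_eq_zero_of_nmem_tsupport {m : ℕ} {h : EuclideanSpace ℝ (Fin m) → ℝ}
    {x : EuclideanSpace ℝ (Fin m)} (hx : x ∉ tsupport h) : gradient h x = 0 := by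
  have h1 : fderiv ℝ h x = 0 := by
    by_contra hne
    exact hx (support_fderiv_subset ℝ (f := h) hne)
  rw [show gradient h x = (InnerProductSpace.toDual ℝ _).symm (fderiv ℝ h x) from rfl, h1,
    map_zero]

/-- The Euclidean Laplacian of `f : ℝ^m → ℝ`, as the sum of the second partial
derivatives along the coordinate directions. -/
noncomputable def lap {m : ℕ} (f : EuclideanSpace ℝ (Fin m) → ℝ)
    (x : EuclideanSpace ℝ (Fin m)) : ℝ :=
  ∑ i : Fin m,
    fderiv ℝ (fun y => fderiv ℝ f y (EuclideanSpace.single i 1)) x (EuclideanSpace.single i 1)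

set_option maxHeartbeats 1000000 in
theorem abstract_hardy_inequality {m : ℕ}
    (U : Set (EuclideanSpace ℝ (Fin m))) (hU : IsOpen U) (Q : ℝ) (hQ : Q ≠ 2)
    (ψ : EuclideanSpace ℝ (Fin m) → ℝ)
    (hψ : ContDiffOn ℝ (⊤ : ℕ∞) ψ U) (hψpos : ∀ x ∈ U, 0 < ψ x)
    (hψeq : ∀ x ∈ U, lap ψ x = (Q - 1) / ψ x * ‖gradient ψ x‖ ^ 2) :
    ∀ f : EuclideanSpace ℝ (Fin m) → ℝ,
      ContDiff ℝ (⊤ : ℕ∞) f → HasCompactSupport f → tsupport f ⊆ U →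
      ∫ x in U, ‖gradient ψ x‖ ^ 2 / (ψ x) ^ 2 * (f x) ^ 2
        ≤ (2 / (Q - 2)) ^ 2 * ∫ x in U, ‖gradient f x‖ ^ 2 := by
  intro f hf hfc hfsU
  obtain _ | n := m
  · -- trivial case `m = 0`
    have h0 : ∀ x : EuclideanSpace ℝ (Fin 0), gradient ψ x = 0 := fun x =>
      Subsingleton.elim _ _
    have hL : ∫ x in U, ‖gradient ψ x‖ ^ 2 / (ψ x) ^ 2 * (f x) ^ 2 = 0 := by
      rw [setIntegral_congr_fun hU.measurableSet
        (fun x _ => by rw [h0]; simp : Set.EqOn _ (fun _ => (0:ℝ)) U)]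
      simp
    rw [hL]
    exact mul_nonneg (sq_nonneg _)
      (setIntegral_nonneg hU.measurableSet fun x _ => sq_nonneg _)
  · -- main case
    have hψne : ∀ x ∈ U, ψ x ≠ 0 := fun x hx => (hψpos x hx).ne'
    have hfder : ContDiffOn ℝ 1 (fderiv ℝ ψ) U := hψ.fderiv_of_isOpen hU (by exact WithTop.coe_le_coe.mpr (le_top : (((1 + 1 : ℕ) : ℕ∞)) ≤ ⊤))
    set d : Fin (n+1) → EuclideanSpace ℝ (Fin (n+1)) → ℝ :=
      fun i y => fderiv ℝ ψ y (EuclideanSpace.single i 1) with hd_def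
    have hd_cd : ∀ i, ContDiffOn ℝ 1 (d i) U := by
      intro i
      have h := (ContinuousLinearMap.apply ℝ ℝ
        (EuclideanSpace.single i (1:ℝ))).contDiff.comp_contDiffOn hfder
      exact h.congr (fun y _ => rfl)
    have hψdiff : ∀ x ∈ U, DifferentiableAt ℝ ψ x := fun x hx =>
      (hψ.contDiffAt (hU.mem_nhds hx)).differentiableAt (by simp)
    have hfd : Differentiable ℝ f := hf.differentiable (by simp)
    classical
    set g : Fin (n+1) → EuclideanSpace ℝ (Fin (n+1)) → ℝ :=
      fun i y => if y ∈ U then (f y * f y) * ((ψ y)⁻¹ * d i y) else 0 with hg_def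
    set φ : Fin (n+1) → EuclideanSpace ℝ (Fin (n+1)) → ℝ :=
      fun i y => (f y * f y) * ((ψ y)⁻¹ * d i y) with hφ_def
    have hgφ : ∀ i, Set.EqOn (g i) (φ i) U := fun i y hy => if_pos hy
    have hg0 : ∀ i, ∀ x ∉ tsupport f, g i x = 0 := by
      intro i x hx
      by_cases h : x ∈ U
      · simp [hg_def, h, image_eq_zero_of_notMem_tsupport hx]
      · simp [hg_def, h]
    have hφcd : ∀ i, ContDiffOn ℝ 1 (φ i) U := fun i =>
      (((hf.mul hf).of_le (by simp)).contDiffOn).mul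
        (((hψ.of_le (by simp)).inv hψne).mul (hd_cd i))
    have hgcd : ∀ i, ContDiff ℝ 1 (g i) := fun i =>
      glue_contDiff hU (isClosed_tsupport f) hfsU
        ((hφcd i).congr (fun y hy => hgφ i hy)) (hg0 i)
    have hgsupp : ∀ i, HasCompactSupport (g i) := fun i =>
      HasCompactSupport.intro hfc (hg0 i)
    have hdd : ∀ i, ∀ x ∈ U, DifferentiableAt ℝ (d i) x := fun i x hx =>
      ((hd_cd i).contDiffAt (hU.mem_nhds hx)).differentiableAt one_ne_zero
    -- pointwise divergence identity on U
    have hdivx : ∀ x ∈ U,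
        ∑ i, fderiv ℝ (g i) x (EuclideanSpace.single i 1)
          = (Q-2) * (‖gradient ψ x‖ ^ 2 / ψ x ^ 2 * f x ^ 2)
            + 2 * (f x * (inner ℝ (gradient ψ x) (gradient f x) : ℝ) / ψ x) := by
      intro x hx
      have hne := hψne x hx
      have hFF : HasFDerivAt (fun y => f y * f y)
          (f x • fderiv ℝ f x + f x • fderiv ℝ f x) x :=
        (hfd x).hasFDerivAt.mul (hfd x).hasFDerivAt
      have hinv : HasFDerivAt (fun y => (ψ y)⁻¹)
          ((-(ψ x ^ 2)⁻¹) • fderiv ℝ ψ x) x :=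
        (hasDerivAt_inv hne).comp_hasFDerivAt x (hψdiff x hx).hasFDerivAt
      have hphi : ∀ i, HasFDerivAt (φ i)
          ((f x * f x) • ((ψ x)⁻¹ • fderiv ℝ (d i) x
              + d i x • ((-(ψ x ^ 2)⁻¹) • fderiv ℝ ψ x))
            + ((ψ x)⁻¹ * d i x) • (f x • fderiv ℝ f x + f x • fderiv ℝ f x)) x := fun i =>
        hFF.mul (hinv.mul (hdd i x hx).hasFDerivAt)
      have hgfd : ∀ i, fderiv ℝ (g i) x = fderiv ℝ (φ i) x := fun i =>
        Filter.EventuallyEq.fderiv_eq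
          (Filter.eventually_of_mem (hU.mem_nhds hx) (fun y hy => hgφ i hy))
      have hterm : ∀ i, fderiv ℝ (g i) x (EuclideanSpace.single i 1)
          = (f x * f x * (ψ x)⁻¹) * fderiv ℝ (d i) x (EuclideanSpace.single i 1)
            + (f x * f x * (-(ψ x ^ 2)⁻¹)) * (d i x * d i x)
            + (2 * f x * (ψ x)⁻¹) * (d i x * fderiv ℝ f x (EuclideanSpace.single i 1)) := by
        intro i
        rw [hgfd i, (hphi i).fderiv]
        simp only [ContinuousLinearMap.add_apply, ContinuousLinearMap.coe_smul',
          Pi.smul_apply, smul_eq_mul]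
        have hdx : fderiv ℝ ψ x (EuclideanSpace.single i 1) = d i x := rfl
        rw [hdx]; ring
      rw [Finset.sum_congr rfl (fun i _ => hterm i), Finset.sum_add_distrib,
        Finset.sum_add_distrib, ← Finset.mul_sum, ← Finset.mul_sum, ← Finset.mul_sum]
      have hlapx : ∑ i, fderiv ℝ (d i) x (EuclideanSpace.single i 1) = lap ψ x := rfl
      have hNx : ∑ i, d i x * d i x = ‖gradient ψ x‖ ^ 2 := by
        simp only [hd_def, fderiv_single_eq]
        rw [sum_mul_coords, real_inner_self_eq_norm_sq]
      have hIx : ∑ i, d i x * fderiv ℝ f x (EuclideanSpace.single i 1)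
          = (inner ℝ (gradient ψ x) (gradient f x) : ℝ) := by
        simp only [hd_def, fderiv_single_eq]
        rw [sum_mul_coords]
      rw [hlapx, hNx, hIx, hψeq x hx]
      field_simp
      ring
    -- the divergence integrates to zero
    set dv : EuclideanSpace ℝ (Fin (n+1)) → ℝ :=
      fun x => ∑ i, fderiv ℝ (g i) x (EuclideanSpace.single i 1) with hdv_def
    have hint0 : ∫ x, dv x = 0 := integral_div_euc g hgcd hgsupp
    have hdiv0 : ∀ x ∉ U, dv x = 0 := by
      intro x hx
      have hxf : x ∉ tsupport f := fun h => hx (hfsU h)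
      have hz : ∀ i, fderiv ℝ (g i) x = 0 := by
        intro i
        have hev : g i =ᶠ[nhds x] (fun _ => (0:ℝ)) :=
          Filter.eventually_of_mem ((isClosed_tsupport f).isOpen_compl.mem_nhds hxf)
            (fun y hy => hg0 i y hy)
        rw [hev.fderiv_eq]
        simp
      simp [hdv_def, hz]
    have hsplit : ∫ x in U, dv x = 0 := by
      rw [setIntegral_eq_integral_of_forall_compl_eq_zero hdiv0]; exact hint0
    set P : EuclideanSpace ℝ (Fin (n+1)) → ℝ :=
      fun x => ‖gradient ψ x‖ ^ 2 / ψ x ^ 2 * f x ^ 2 with hP_def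
    set J : EuclideanSpace ℝ (Fin (n+1)) → ℝ :=
      fun x => f x * (inner ℝ (gradient ψ x) (gradient f x) : ℝ) / ψ x with hJ_def
    have hEq : Set.EqOn dv (fun x => (Q-2) * P x + 2 * J x) U := fun x hx => hdivx x hx
    have hPJ : ∫ x in U, ((Q-2) * P x + 2 * J x) = 0 := by
      rw [← setIntegral_congr_fun hU.measurableSet hEq]
      exact hsplit
    -- continuity and integrability
    have hgradψc : ContinuousOn (fun x => gradient ψ x) U :=
      ((InnerProductSpace.toDual ℝ
        (EuclideanSpace ℝ (Fin (n+1)))).symm.continuous.comp_continuousOn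
          hfder.continuousOn).congr (fun y _ => rfl)
    have hgradf : Continuous (fun x => gradient f x) :=
      (InnerProductSpace.toDual ℝ
        (EuclideanSpace ℝ (Fin (n+1)))).symm.continuous.comp (hf.continuous_fderiv (by simp))
    have hψcont : ContinuousOn ψ U := hψ.continuousOn
    have hPcont : ContinuousOn P U := by
      apply ContinuousOn.mul
      · exact ContinuousOn.div (hgradψc.norm.pow 2) (hψcont.pow 2)
          (fun x hx => pow_ne_zero 2 (hψne x hx))
      · exact (hf.continuous.pow 2).continuousOn
    have hJcont : ContinuousOn J U :=
      ContinuousOn.div ((hf.continuous.continuousOn).mul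
        (ContinuousOn.inner hgradψc hgradf.continuousOn)) hψcont hψne
    have hzeroP : ∀ x ∉ tsupport f, P x = 0 := fun x hx => by
      simp [hP_def, image_eq_zero_of_notMem_tsupport hx]
    have hzeroJ : ∀ x ∉ tsupport f, J x = 0 := fun x hx => by
      simp [hJ_def, image_eq_zero_of_notMem_tsupport hx]
    have hPc : Continuous P := contDiff_zero.mp
      (glue_contDiff hU (isClosed_tsupport f) hfsU (contDiffOn_zero.mpr hPcont) hzeroP)
    have hJc : Continuous J := contDiff_zero.mp
      (glue_contDiff hU (isClosed_tsupport f) hfsU (contDiffOn_zero.mpr hJcont) hzeroJ)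
    have hPint : IntegrableOn P U volume :=
      (hPc.integrable_of_hasCompactSupport
        (HasCompactSupport.intro hfc hzeroP)).integrableOn
    have hJint : IntegrableOn J U volume :=
      (hJc.integrable_of_hasCompactSupport
        (HasCompactSupport.intro hfc hzeroJ)).integrableOn
    have hBc : Continuous (fun x => ‖gradient f x‖ ^ 2) := (hgradf.norm).pow 2
    have hBzero : ∀ x ∉ tsupport f, ‖gradient f x‖ ^ 2 = 0 := fun x hx => by
      rw [gradient_eq_zero_of_nmem_tsupport hx]; simp
    have hBint : IntegrableOn (fun x => ‖gradient f x‖ ^ 2) U volume :=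
      (hBc.integrable_of_hasCompactSupport
        (HasCompactSupport.intro hfc hBzero)).integrableOn
    -- the basic identity
    have hsum : (Q-2) * (∫ x in U, P x) + 2 * (∫ x in U, J x) = 0 := by
      rw [← integral_const_mul, ← integral_const_mul,
        ← integral_add (hPint.const_mul _) (hJint.const_mul _)]
      exact hPJ
    set A := ∫ x in U, P x with hA_def
    set B := ∫ x in U, ‖gradient f x‖ ^ 2 with hB_def
    set I := ∫ x in U, J x with hI_def
    have hA0 : 0 ≤ A := setIntegral_nonneg hU.measurableSet
      (fun x hx => by simp only [hP_def]; positivity)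
    have hcabs : 0 < |Q - 2| := abs_pos.mpr (sub_ne_zero.mpr hQ)
    -- pointwise bound
    have hpt : ∀ x ∈ U, |J x| ≤ |Q-2|/4 * P x + 1/|Q-2| * ‖gradient f x‖ ^ 2 := by
      intro x hx
      have hp := hψpos x hx
      have key : ∀ t M k : ℝ, 0 ≤ t → 0 ≤ M → 0 < k →
          t * M ≤ k/4 * t^2 + 1/k * M^2 := by
        intro t M k ht hM hk
        have h1 : k * (1/k) = 1 := by field_simp
        nlinarith [sq_nonneg (k*t - 2*M), mul_pos hk hk, sq_nonneg t, sq_nonneg M, hk]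
      have hinner := abs_real_inner_le_norm (gradient ψ x) (gradient f x)
      have h2 : |J x| ≤ (|f x| * ‖gradient ψ x‖ / ψ x) * ‖gradient f x‖ := by
        have hJx : |J x| = |f x| * |(inner ℝ (gradient ψ x) (gradient f x) : ℝ)| / ψ x := by
          simp only [hJ_def]
          rw [abs_div, abs_mul, abs_of_pos hp]
        rw [hJx]
        have h3 : |f x| * |(inner ℝ (gradient ψ x) (gradient f x) : ℝ)|
            ≤ |f x| * (‖gradient ψ x‖ * ‖gradient f x‖) :=
          mul_le_mul_of_nonneg_left hinner (abs_nonneg _)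
        calc |f x| * |(inner ℝ (gradient ψ x) (gradient f x) : ℝ)| / ψ x
            ≤ |f x| * (‖gradient ψ x‖ * ‖gradient f x‖) / ψ x := by
              exact (div_le_div_iff_of_pos_right hp).mpr h3
          _ = (|f x| * ‖gradient ψ x‖ / ψ x) * ‖gradient f x‖ := by ring
      have ht2 : (|f x| * ‖gradient ψ x‖ / ψ x)^2 = P x := by
        simp only [hP_def]
        rw [div_pow, mul_pow, sq_abs]
        ring
      calc |J x| ≤ (|f x| * ‖gradient ψ x‖ / ψ x) * ‖gradient f x‖ := h2
        _ ≤ |Q-2|/4 * (|f x| * ‖gradient ψ x‖ / ψ x)^2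
            + 1/|Q-2| * ‖gradient f x‖^2 :=
          key _ _ _ (by positivity) (norm_nonneg _) hcabs
        _ = |Q-2|/4 * P x + 1/|Q-2| * ‖gradient f x‖ ^ 2 := by rw [ht2]
    have hImono : |I| ≤ |Q-2|/4 * A + 1/|Q-2| * B := by
      have h1 : |I| ≤ ∫ x in U, |J x| := by
        have h0 := norm_integral_le_integral_norm (μ := volume.restrict U) J
        simp only [Real.norm_eq_abs] at h0
        exact h0
      refine h1.trans ?_
      have hint2 : IntegrableOn (fun x => |Q-2|/4 * P x) U volume :=
        hPint.const_mul (|Q-2|/4)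
      have hint3 : IntegrableOn (fun x => 1/|Q-2| * ‖gradient f x‖ ^ 2) U volume :=
        hBint.const_mul (1/|Q-2|)
      have hstep : ∫ x in U, |J x|
          ≤ ∫ x in U, (|Q-2|/4 * P x + 1/|Q-2| * ‖gradient f x‖ ^ 2) :=
        setIntegral_mono_on hJint.abs (hint2.add hint3) hU.measurableSet hpt
      refine hstep.trans (le_of_eq ?_)
      rw [integral_add hint2 hint3, integral_const_mul, integral_const_mul]
    have hcA : |Q-2| * A = 2 * |I| := by
      have h1 : (Q-2) * A = -(2 * I) := by linarith [hsum]
      have h2 : |(Q-2) * A| = |-(2*I)| := by rw [h1]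
      rwa [abs_mul, abs_of_nonneg hA0, abs_neg, abs_mul, abs_two] at h2
    have hfinal : |Q-2| * A ≤ |Q-2|/2 * A + 2/|Q-2| * B := by
      rw [hcA]
      calc 2 * |I| ≤ 2 * (|Q-2|/4 * A + 1/|Q-2| * B) := by linarith [hImono]
        _ = |Q-2|/2 * A + 2/|Q-2| * B := by ring
    have eab : |Q-2| * |Q-2| = (Q-2)^2 := by rw [abs_mul_abs_self]; ring
    have ediv : |Q-2| / |Q-2| = 1 := div_self hcabs.ne'
    have hmul := mul_le_mul_of_nonneg_left hfinal (abs_nonneg (Q-2))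
    have e1 : |Q-2| * (|Q-2| * A) = (Q-2)^2 * A := by rw [← mul_assoc, eab]
    have e2 : |Q-2| * (|Q-2|/2 * A + 2/|Q-2| * B) = (Q-2)^2/2 * A + 2 * B := by
      calc |Q-2| * (|Q-2|/2 * A + 2/|Q-2| * B)
          = (|Q-2| * |Q-2|)/2 * A + (|Q-2|/|Q-2|) * (2*B) := by ring
        _ = (Q-2)^2/2 * A + 2 * B := by rw [eab, ediv]; ring
    have h6 : (Q-2)^2 * A ≤ (Q-2)^2/2 * A + 2 * B := by rw [← e1, ← e2]; exact hmul
    have h7 : (Q-2)^2 * A ≤ 4 * B := by linarith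
    have hc2 : 0 < (Q-2)^2 := by
      have := sub_ne_zero.mpr hQ
      positivity
    show A ≤ (2/(Q-2))^2 * B
    rw [div_pow, show (2:ℝ)^2 = 4 by norm_num, div_mul_eq_mul_div, le_div_iff₀ hc2]
    nlinarith [h7]
end

section
/- Let U ⊆ ℝ^m be open and let ψ be a smooth strictly positive function on U satisfying Δψ = |∇ψ|²/ψ on U (the Laplacian comparison condition with Q = 2), and suppose that either ψ ≤ 1 on U or ψ ≥ 1 on U. Then for every α ∈ ℝ with α ≠ 1 and every f ∈ C_c^∞(U \ {ψ = 1}) the logarithmic Hardy inequality ∫ |log ψ|^α·(|∇ψ|²/(ψ²·(log ψ)²))·f² dx ≤ (2/(α−1))²·∫ |log ψ|^α·|∇f|² dx holds; in particular, for α = 0, ∫ (|∇ψ|²/(ψ²·(log ψ)²))·f² dx ≤ 4·∫ |∇f|² dx. -/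
open Real MeasureTheory

section aux

variable {m : ℕ}

private lemma ibp_zero (F : EuclideanSpace ℝ (Fin m) → ℝ) (v : EuclideanSpace ℝ (Fin m))
    (hdiff : Differentiable ℝ F) (hFi : Integrable F)
    (hF'i : Integrable (fun x => fderiv ℝ F x v)) :
    ∫ x, fderiv ℝ F x v = 0 := by
  have h := integral_mul_fderiv_eq_neg_fderiv_mul_of_integrable (μ := volume)
    (f := F) (g := fun _ => (1 : ℝ)) (v := v)
    (by simpa using hF'i) (by simp) (by simpa using hFi)
    (fun x _ => hdiff x) (fun x _ => differentiableAt_const (1:ℝ))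
  simp only [fderiv_fun_const, Pi.zero_apply, ContinuousLinearMap.zero_apply, mul_zero, mul_one,
    integral_zero] at h
  linarith [h]

private lemma grad_coord (g : EuclideanSpace ℝ (Fin m) → ℝ) (x : EuclideanSpace ℝ (Fin m))
    (i : Fin m) : gradient g x i = fderiv ℝ g x (EuclideanSpace.single i 1) := by
  have : inner ℝ (gradient g x) (EuclideanSpace.single i (1:ℝ))
      = fderiv ℝ g x (EuclideanSpace.single i 1) := by
    simp [gradient, InnerProductSpace.toDual_symm_apply]
  rw [← this, real_inner_comm, EuclideanSpace.inner_single_left]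
  simp

private lemma inner_grad (g h : EuclideanSpace ℝ (Fin m) → ℝ) (x : EuclideanSpace ℝ (Fin m)) :
    (inner ℝ (gradient g x) (gradient h x) : ℝ)
      = ∑ i, fderiv ℝ g x (EuclideanSpace.single i 1) * fderiv ℝ h x (EuclideanSpace.single i 1)
    := by
  simp [PiLp.inner_apply, RCLike.inner_apply, grad_coord, -inner_gradient_left,
    -inner_gradient_right]
  exact Finset.sum_congr rfl fun i _ => mul_comm _ _

private lemma norm_grad (g : EuclideanSpace ℝ (Fin m) → ℝ) (x : EuclideanSpace ℝ (Fin m)) :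
    ‖gradient g x‖^2 = ∑ i, (fderiv ℝ g x (EuclideanSpace.single i 1))^2 := by
  rw [← real_inner_self_eq_norm_sq, inner_grad]
  simp [sq]

private lemma aux_cont {V K : Set (EuclideanSpace ℝ (Fin m))} (hV : IsOpen V)
    (hK : IsClosed K) (hKV : K ⊆ V) {g : EuclideanSpace ℝ (Fin m) → ℝ}
    (hgV : ContinuousOn g V) (hg0 : ∀ x ∉ K, g x = 0) : Continuous g := by
  rw [continuous_iff_continuousAt]
  intro x
  by_cases hx : x ∈ V
  · exact hgV.continuousAt (hV.mem_nhds hx)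
  · have hxK : x ∉ K := fun h => hx (hKV h)
    have hev : g =ᶠ[nhds x] (fun _ => (0:ℝ)) := by
      filter_upwards [hK.isOpen_compl.mem_nhds hxK] with y hy using hg0 y hy
    exact hev.continuousAt

private lemma aux_integrable {V K : Set (EuclideanSpace ℝ (Fin m))} (hV : IsOpen V)
    (hK : IsClosed K) (hKc : IsCompact K) (hKV : K ⊆ V) {g : EuclideanSpace ℝ (Fin m) → ℝ}
    (hgV : ContinuousOn g V) (hg0 : ∀ x ∉ K, g x = 0) : Integrable g :=
  (aux_cont hV hK hKV hgV hg0).integrable_of_hasCompactSupport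
    (HasCompactSupport.intro hKc hg0)

private lemma aux_fderiv_zero {K : Set (EuclideanSpace ℝ (Fin m))} (hK : IsClosed K)
    {g : EuclideanSpace ℝ (Fin m) → ℝ} (hg0 : ∀ x ∉ K, g x = 0)
    {x : EuclideanSpace ℝ (Fin m)} (hx : x ∉ K) : fderiv ℝ g x = 0 := by
  have hev : g =ᶠ[nhds x] (fun _ => (0:ℝ)) := by
    filter_upwards [hK.isOpen_compl.mem_nhds hx] with y hy using hg0 y hy
  rw [hev.fderiv_eq]
  exact fderiv_const_apply 0

private lemma aux_diff {V K : Set (EuclideanSpace ℝ (Fin m))} (hV : IsOpen V)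
    (hK : IsClosed K) (hKV : K ⊆ V) {g : EuclideanSpace ℝ (Fin m) → ℝ}
    (hgV : ∀ x ∈ V, DifferentiableAt ℝ g x) (hg0 : ∀ x ∉ K, g x = 0) :
    Differentiable ℝ g := by
  intro x
  by_cases hx : x ∈ V
  · exact hgV x hx
  · have hxK : x ∉ K := fun h => hx (hKV h)
    have hev : g =ᶠ[nhds x] (fun _ => (0:ℝ)) := by
      filter_upwards [hK.isOpen_compl.mem_nhds hxK] with y hy using hg0 y hy
    exact (differentiableAt_const 0).congr_of_eventuallyEq hev

end aux

set_option maxHeartbeats 4000000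

theorem logarithmic_hardy_inequality_Q_eq_two {m : ℕ}
    (U : Set (EuclideanSpace ℝ (Fin m))) (hU : IsOpen U)
    (ψ : EuclideanSpace ℝ (Fin m) → ℝ)
    (hψ : ContDiffOn ℝ (⊤ : ℕ∞) ψ U) (hψpos : ∀ x ∈ U, 0 < ψ x)
    (hψeq : ∀ x ∈ U, lap ψ x = ‖gradient ψ x‖ ^ 2 / ψ x)
    (hone : (∀ x ∈ U, ψ x ≤ 1) ∨ (∀ x ∈ U, 1 ≤ ψ x)) :
    (∀ α : ℝ, α ≠ 1 → ∀ f : EuclideanSpace ℝ (Fin m) → ℝ,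
      ContDiff ℝ (⊤ : ℕ∞) f → HasCompactSupport f → tsupport f ⊆ U \ {x | ψ x = 1} →
      ∫ x in U, |Real.log (ψ x)| ^ α
          * (‖gradient ψ x‖ ^ 2 / ((ψ x) ^ 2 * (Real.log (ψ x)) ^ 2)) * (f x) ^ 2
        ≤ (2 / (α - 1)) ^ 2 * ∫ x in U, |Real.log (ψ x)| ^ α * ‖gradient f x‖ ^ 2)
    ∧ (∀ f : EuclideanSpace ℝ (Fin m) → ℝ,
      ContDiff ℝ (⊤ : ℕ∞) f → HasCompactSupport f → tsupport f ⊆ U \ {x | ψ x = 1} →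
      ∫ x in U, ‖gradient ψ x‖ ^ 2 / ((ψ x) ^ 2 * (Real.log (ψ x)) ^ 2) * (f x) ^ 2
        ≤ 4 * ∫ x in U, ‖gradient f x‖ ^ 2) := by
  have key : ∀ α : ℝ, α ≠ 1 → ∀ f : EuclideanSpace ℝ (Fin m) → ℝ,
      ContDiff ℝ (⊤ : ℕ∞) f → HasCompactSupport f → tsupport f ⊆ U \ {x | ψ x = 1} →
      ∫ x in U, |Real.log (ψ x)| ^ α
          * (‖gradient ψ x‖ ^ 2 / ((ψ x) ^ 2 * (Real.log (ψ x)) ^ 2)) * (f x) ^ 2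
        ≤ (2 / (α - 1)) ^ 2 * ∫ x in U, |Real.log (ψ x)| ^ α * ‖gradient f x‖ ^ 2 := by
    intro α hα f hf hfc hfs
    set V : Set (EuclideanSpace ℝ (Fin m)) := U \ {x | ψ x = 1} with hV_def
    have hVU : V ⊆ U := Set.diff_subset
    have hVopen : IsOpen V := by
      rw [isOpen_iff_mem_nhds]
      intro x hx
      have hcont : ContinuousAt ψ x := (hψ.continuousOn.continuousAt (hU.mem_nhds hx.1))
      have hne : ∀ᶠ y in nhds x, ψ y ≠ 1 := hcont.eventually_ne hx.2
      filter_upwards [hU.mem_nhds hx.1, hne] with y h1 h2 using ⟨h1, h2⟩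
    have hLne : ∀ x ∈ V, Real.log (ψ x) ≠ 0 := by
      intro x hx
      exact Real.log_ne_zero_of_pos_of_ne_one (hψpos x hx.1) hx.2
    obtain ⟨ε, hε1, hsgn⟩ : ∃ ε : ℝ, (ε = 1 ∨ ε = -1) ∧
        ∀ x ∈ V, |Real.log (ψ x)| = ε * Real.log (ψ x) := by
      rcases hone with h1 | h1
      · refine ⟨-1, Or.inr rfl, fun x hx => ?_⟩
        have : ψ x < 1 := lt_of_le_of_ne (h1 x hx.1) hx.2
        have := Real.log_neg (hψpos x hx.1) this
        rw [abs_of_neg this]; ring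
      · refine ⟨1, Or.inl rfl, fun x hx => ?_⟩
        have : 1 < ψ x := lt_of_le_of_ne (h1 x hx.1) (Ne.symm hx.2)
        have := Real.log_pos this
        rw [abs_of_pos this]; ring
    have hpos : ∀ x ∈ V, 0 < ε * Real.log (ψ x) := by
      intro x hx
      rw [← hsgn x hx]
      exact abs_pos.mpr (hLne x hx)
    set K : Set (EuclideanSpace ℝ (Fin m)) := tsupport f with hK_def
    have hKcl : IsClosed K := isClosed_tsupport f
    have hKc : IsCompact K := hfc
    have hψne : ∀ x ∈ V, ψ x ≠ 0 := fun x hx => ne_of_gt (hψpos x (hVU hx))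
    have hεLne : ∀ x ∈ V, ε * Real.log (ψ x) ≠ 0 := fun x hx => ne_of_gt (hpos x hx)
    have hαne : α - 1 ≠ 0 := sub_ne_zero.mpr hα
    -- zero off K
    have hfK : ∀ x ∉ K, f x = 0 := fun x hx => image_eq_zero_of_notMem_tsupport hx
    have hdfK : ∀ x ∉ K, fderiv ℝ f x = 0 := by
      intro x hx
      by_contra hne
      exact hx (support_fderiv_subset ℝ (Function.mem_support.mpr hne))
    have hgfK : ∀ x ∉ K, gradient f x = 0 := by
      intro x hx
      simp [gradient, hdfK x hx]
    -- main definitions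
    set w : EuclideanSpace ℝ (Fin m) → ℝ :=
      fun y => (ε * Real.log (ψ y)) ^ (α - 1) * (ε / (α - 1)) * (ψ y)⁻¹ with hw_def
    set F : Fin m → EuclideanSpace ℝ (Fin m) → ℝ :=
      fun i y => w y * fderiv ℝ ψ y (EuclideanSpace.single i 1) * (f y * f y) with hF_def
    set G : EuclideanSpace ℝ (Fin m) → ℝ := fun y => |Real.log (ψ y)| ^ α
        * (‖gradient ψ y‖ ^ 2 / ((ψ y) ^ 2 * (Real.log (ψ y)) ^ 2)) * (f y) ^ 2 with hG_def
    set R : EuclideanSpace ℝ (Fin m) → ℝ :=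
      fun y => 2 * (w y * f y * (inner ℝ (gradient ψ y) (gradient f y) : ℝ)) with hR_def
    set H : EuclideanSpace ℝ (Fin m) → ℝ :=
      fun y => |Real.log (ψ y)| ^ α * ‖gradient f y‖ ^ 2 with hH_def
    -- smoothness facts
    have htop : (((⊤ : ℕ∞) : WithTop ℕ∞) + 1 : WithTop ℕ∞) ≤ ((⊤ : ℕ∞) : WithTop ℕ∞) := by
      exact_mod_cast (le_top : (⊤ : ℕ∞) + 1 ≤ ⊤)
    have hψV : ContDiffOn ℝ (⊤ : ℕ∞) ψ V := hψ.mono hVU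
    have hcdεL : ContDiffOn ℝ (⊤ : ℕ∞) (fun y => ε * Real.log (ψ y)) V :=
      contDiffOn_const.mul (hψV.log hψne)
    have hcdA : ContDiffOn ℝ (⊤ : ℕ∞) (fun y => (ε * Real.log (ψ y)) ^ (α - 1)) V :=
      hcdεL.rpow_const_of_ne hεLne
    have hcdw : ContDiffOn ℝ (⊤ : ℕ∞) w V := (hcdA.mul contDiffOn_const).mul (hψV.inv hψne)
    have hcdφ : ∀ i : Fin m,
        ContDiffOn ℝ (⊤ : ℕ∞) (fun y => fderiv ℝ ψ y (EuclideanSpace.single i 1)) U :=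
      fun i => (hψ.fderiv_of_isOpen hU htop).clm_apply contDiffOn_const
    have hcdF : ∀ i, ContDiffOn ℝ (⊤ : ℕ∞) (F i) V :=
      fun i => (hcdw.mul ((hcdφ i).mono hVU)).mul ((hf.mul hf).contDiffOn)
    -- continuity of gradients
    have hgradψcont : ContinuousOn (gradient ψ) U := by
      have h1 : ContinuousOn (fderiv ℝ ψ) U := hψ.continuousOn_fderiv_of_isOpen hU (by simp)
      exact ((InnerProductSpace.toDual ℝ _).symm.continuous.comp_continuousOn h1)
    have hgradfcont : Continuous (gradient f) :=
      (InnerProductSpace.toDual ℝ _).symm.continuous.comp (hf.continuous_fderiv (by simp))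
    -- integrability
    have habs_cont : ContinuousOn (fun y => |Real.log (ψ y)| ^ α) V := by
      apply ContinuousOn.rpow_const ((hψV.continuousOn.log hψne).abs)
      intro x hx
      exact Or.inl (abs_ne_zero.mpr (hLne x hx))
    have hGcontV : ContinuousOn G V := by
      apply ContinuousOn.mul
      apply ContinuousOn.mul habs_cont
      · apply ContinuousOn.div ((hgradψcont.mono hVU).norm.pow 2)
          ((hψV.continuousOn.pow 2).mul ((hψV.continuousOn.log hψne).pow 2))
        intro x hx
        have := hψne x hx
        have := hLne x hx
        exact mul_ne_zero (pow_ne_zero _ (hψne x hx)) (pow_ne_zero _ (hLne x hx))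
      · exact (hf.continuous.pow 2).continuousOn
    have hG0 : ∀ x ∉ K, G x = 0 := by
      intro x hx; simp [hG_def, hfK x hx]
    have hGint : Integrable G := aux_integrable hVopen hKcl hKc hfs hGcontV hG0
    have hHcontV : ContinuousOn H V :=
      habs_cont.mul (hgradfcont.norm.pow 2).continuousOn
    have hH0 : ∀ x ∉ K, H x = 0 := by
      intro x hx; simp [hH_def, hgfK x hx]
    have hHint : Integrable H := aux_integrable hVopen hKcl hKc hfs hHcontV hH0
    have hRcontV : ContinuousOn R V := by
      apply ContinuousOn.mul continuousOn_const
      apply ContinuousOn.mul (hcdw.continuousOn.mul hf.continuous.continuousOn)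
      exact (hgradψcont.mono hVU).inner hgradfcont.continuousOn
    have hR0 : ∀ x ∉ K, R x = 0 := by
      intro x hx; simp [hR_def, hfK x hx]
    have hRint : Integrable R := aux_integrable hVopen hKcl hKc hfs hRcontV hR0
    have hF0 : ∀ i, ∀ x ∉ K, F i x = 0 := by
      intro i x hx; simp [hF_def, hfK x hx]
    have hFint : ∀ i, Integrable (F i) :=
      fun i => aux_integrable hVopen hKcl hKc hfs (hcdF i).continuousOn (hF0 i)
    have hT0 : ∀ i, ∀ x ∉ K, fderiv ℝ (F i) x = 0 :=
      fun i x hx => aux_fderiv_zero hKcl (hF0 i) hx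
    have hcdT : ∀ i, ContDiffOn ℝ (⊤ : ℕ∞)
        (fun x => fderiv ℝ (F i) x (EuclideanSpace.single i 1)) V :=
      fun i => ((hcdF i).fderiv_of_isOpen hVopen htop).clm_apply contDiffOn_const
    have hTint : ∀ i, Integrable (fun x => fderiv ℝ (F i) x (EuclideanSpace.single i 1)) :=
      fun i => aux_integrable hVopen hKcl hKc hfs (hcdT i).continuousOn
        (fun x hx => by rw [hT0 i x hx]; rfl)
    have hdiffF : ∀ i, Differentiable ℝ (F i) :=
      fun i => aux_diff hVopen hKcl hfs
        (fun x hx => ((hcdF i).differentiableOn (by simp)).differentiableAt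
          (hVopen.mem_nhds hx)) (hF0 i)
    have hibp : ∀ i, ∫ x, fderiv ℝ (F i) x (EuclideanSpace.single i 1) = 0 :=
      fun i => ibp_zero (F i) _ (hdiffF i) (hFint i) (hTint i)
    -- the pointwise divergence identity on V
    have hSx : ∀ x ∈ V, (∑ i, fderiv ℝ (F i) x (EuclideanSpace.single i 1)) = G x + R x := by
      intro x hx
      have hp : 0 < ψ x := hψpos x (hVU hx)
      have hpne : ψ x ≠ 0 := ne_of_gt hp
      have hl : Real.log (ψ x) ≠ 0 := hLne x hx
      have ht : 0 < ε * Real.log (ψ x) := hpos x hx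
      have htne : ε * Real.log (ψ x) ≠ 0 := ne_of_gt ht
      have hψdA : DifferentiableAt ℝ ψ x :=
        (hψ.differentiableOn (by simp)).differentiableAt (hU.mem_nhds (hVU hx))
      have hψd : HasFDerivAt ψ (fderiv ℝ ψ x) x := hψdA.hasFDerivAt
      have hLd : HasFDerivAt (fun y => Real.log (ψ y)) ((ψ x)⁻¹ • fderiv ℝ ψ x) x :=
        hψd.log hpne
      have hεLd : HasFDerivAt (fun y => ε * Real.log (ψ y))
          (ε • ((ψ x)⁻¹ • fderiv ℝ ψ x)) x := hLd.const_mul ε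
      have hAd : HasFDerivAt (fun y => (ε * Real.log (ψ y)) ^ (α - 1))
          (((α - 1) * (ε * Real.log (ψ x)) ^ (α - 1 - 1))
            • (ε • ((ψ x)⁻¹ • fderiv ℝ ψ x))) x :=
        hεLd.rpow_const (Or.inl htne)
      have hinvd : HasFDerivAt (fun y => (ψ y)⁻¹) ((-(ψ x ^ 2)⁻¹) • fderiv ℝ ψ x) x :=
        (hasDerivAt_inv hpne).comp_hasFDerivAt x hψd
      have hwd := (hAd.mul_const (ε / (α - 1))).mul hinvd
      have hwd : HasFDerivAt w _ x := hwd
      have hfd : HasFDerivAt f (fderiv ℝ f x) x := (hf.differentiable (by simp) x).hasFDerivAt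
      have hff := hfd.mul hfd
      have hφd : ∀ i, HasFDerivAt (fun y => fderiv ℝ ψ y (EuclideanSpace.single i 1))
          (fderiv ℝ (fun y => fderiv ℝ ψ y (EuclideanSpace.single i 1)) x) x := fun i =>
        (((hcdφ i).differentiableOn (by simp)).differentiableAt
          (hU.mem_nhds (hVU hx))).hasFDerivAt
      have hterm : ∀ i, fderiv ℝ (F i) x (EuclideanSpace.single i 1) =
          2 * w x * f x * (fderiv ℝ ψ x (EuclideanSpace.single i 1)
              * fderiv ℝ f x (EuclideanSpace.single i 1))
          + f x * f x * (w x
              * fderiv ℝ (fun y => fderiv ℝ ψ y (EuclideanSpace.single i 1)) x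
                  (EuclideanSpace.single i 1))
          + f x * f x * ((α - 1) * (ε * Real.log (ψ x)) ^ (α - 1 - 1) * ε * (ψ x)⁻¹
                * (ε / (α - 1)) * (ψ x)⁻¹
              + (ε * Real.log (ψ x)) ^ (α - 1) * (ε / (α - 1)) * (-(ψ x ^ 2)⁻¹))
            * (fderiv ℝ ψ x (EuclideanSpace.single i 1))^2 := by
        intro i
        have hFd : HasFDerivAt (fun y => w y * fderiv ℝ ψ y (EuclideanSpace.single i 1) * (f y * f y)) _ x :=
          (hwd.mul (hφd i)).mul hff
        rw [hF_def]
        rw [hFd.fderiv]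
        simp only [ContinuousLinearMap.add_apply, ContinuousLinearMap.coe_smul', Pi.smul_apply,
          smul_eq_mul, Pi.mul_apply, hw_def]
        ring
      rw [Finset.sum_congr rfl (fun i _ => hterm i)]
      simp only [Finset.sum_add_distrib, ← Finset.mul_sum]
      have hlap : (∑ i, fderiv ℝ (fun y => fderiv ℝ ψ y (EuclideanSpace.single i 1)) x
          (EuclideanSpace.single i 1)) = lap ψ x := rfl
      rw [hlap, hψeq x (hVU hx), ← inner_grad, ← norm_grad]
      simp only [hG_def, hR_def, hw_def]
      have e1 : (ε * Real.log (ψ x)) ^ (α - 1)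
          = (ε * Real.log (ψ x)) ^ α / (ε * Real.log (ψ x)) := by
        rw [Real.rpow_sub ht, Real.rpow_one]
      have e2 : (ε * Real.log (ψ x)) ^ (α - 1 - 1)
          = (ε * Real.log (ψ x)) ^ α / (ε * Real.log (ψ x)) / (ε * Real.log (ψ x)) := by
        rw [Real.rpow_sub ht, Real.rpow_one, e1]
      have e3 : |Real.log (ψ x)| ^ α = (ε * Real.log (ψ x)) ^ α := by rw [hsgn x hx]
      rw [e1, e2, e3]
      field_simp
      ring_nf
      have hε0 : ε ≠ 0 := by rcases hε1 with rfl | rfl <;> norm_num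
      have hεε : ε * ε⁻¹ = 1 := mul_inv_cancel₀ hε0
      linear_combination (f x ^ 2 * ‖gradient ψ x‖ ^ 2 * α - f x ^ 2 * ‖gradient ψ x‖ ^ 2) * hεε
    -- pointwise inequality
    have hPW : ∀ x, -R x ≤ (1/2) * G x + (2/(α-1)^2) * H x := by
      intro x
      by_cases hx : x ∈ V
      · have hαpos : 0 < |α - 1| := abs_pos.mpr hαne
        have hp : 0 < ψ x := hψpos x (hVU hx)
        have hl : Real.log (ψ x) ≠ 0 := hLne x hx
        have hlabs : 0 < |Real.log (ψ x)| := abs_pos.mpr hl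
        set q : ℝ := |Real.log (ψ x)| ^ α with hq_def
        have hq0 : 0 ≤ q := Real.rpow_nonneg (abs_nonneg _) α
        set u : ℝ := ‖gradient ψ x‖ * |f x| / (ψ x * |Real.log (ψ x)|) with hu_def
        set v : ℝ := ‖gradient f x‖ with hv_def
        have h1 : (ε * Real.log (ψ x)) ^ (α - 1) = q / |Real.log (ψ x)| := by
          rw [← hsgn x hx, hq_def, Real.rpow_sub hlabs, Real.rpow_one]
        have hwabs : |w x| = q / |Real.log (ψ x)| * (1/|α - 1|) * (1/ψ x) := by
          have hεabs : |ε| = 1 := by rcases hε1 with rfl | rfl <;> norm_num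
          simp only [hw_def]
          rw [h1, abs_mul, abs_mul]
          rw [abs_of_nonneg (show (0:ℝ) ≤ q / |Real.log (ψ x)| by positivity)]
          rw [abs_div, hεabs, abs_inv, abs_of_pos hp]
          field_simp
        have step1 : -R x ≤ 2 * (|w x| * |f x| * (‖gradient ψ x‖ * ‖gradient f x‖)) := by
          have hi := abs_real_inner_le_norm (gradient ψ x) (gradient f x)
          have h2 : |R x| ≤ 2 * (|w x| * |f x| * (‖gradient ψ x‖ * ‖gradient f x‖)) := by
            have heq : |R x|
                = 2 * (|w x| * |f x| * |(inner ℝ (gradient ψ x) (gradient f x) : ℝ)|) := by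
              simp only [hR_def]
              rw [abs_mul, abs_mul, abs_mul, abs_two]
            rw [heq]
            have := mul_le_mul_of_nonneg_left hi
              (mul_nonneg (abs_nonneg (w x)) (abs_nonneg (f x)))
            linarith
          linarith [neg_abs_le (R x), h2]
        have step2 : 2 * (|w x| * |f x| * (‖gradient ψ x‖ * ‖gradient f x‖))
            = q * (2/|α - 1| * (u * v)) := by
          rw [hwabs, hu_def, hv_def]
          field_simp
        have amgm : 2/|α - 1| * (u * v) ≤ 1/2 * u^2 + 2/(α-1)^2 * v^2 := by
          have h4 : (2:ℝ)/(α-1)^2 = (2/|α-1|)^2/2 := by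
            rw [div_pow, sq_abs]; ring
          rw [h4]
          nlinarith [sq_nonneg (u - 2/|α-1| * v)]
        have hGq : G x = q * u^2 := by
          rw [hG_def, hu_def, hq_def]
          simp only []
          rw [div_pow, mul_pow, mul_pow, sq_abs, sq_abs]
          field_simp
        have hHq : H x = q * v^2 := by rw [hH_def, hv_def, hq_def]
        calc -R x ≤ 2 * (|w x| * |f x| * (‖gradient ψ x‖ * ‖gradient f x‖)) := step1
          _ = q * (2/|α - 1| * (u * v)) := step2
          _ ≤ q * (1/2 * u^2 + 2/(α-1)^2 * v^2) := by
              apply mul_le_mul_of_nonneg_left amgm hq0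
          _ = (1/2) * G x + (2/(α-1)^2) * H x := by rw [hGq, hHq]; ring
      · have hxK : x ∉ K := fun h => hx (hfs h)
        rw [hR0 x hxK, hG0 x hxK]
        have hH0' : 0 ≤ H x := by
          rw [hH_def]
          exact mul_nonneg (Real.rpow_nonneg (abs_nonneg _) α) (by positivity)
        have : (0:ℝ) ≤ 2/(α-1)^2 := by positivity
        nlinarith
    -- assembling
    have hglobal : ∀ x, (∑ i, fderiv ℝ (F i) x (EuclideanSpace.single i 1)) = G x + R x := by
      intro x
      by_cases hx : x ∈ V
      · exact hSx x hx
      · have hxK : x ∉ K := fun h => hx (hfs h)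
        have hz : ∀ i : Fin m, fderiv ℝ (F i) x (EuclideanSpace.single i 1) = 0 :=
          fun i => by rw [hT0 i x hxK]; rfl
        rw [Finset.sum_congr rfl (fun i _ => hz i), hG0 x hxK, hR0 x hxK]
        simp
    have hSsum0 : ∫ x, (∑ i, fderiv ℝ (F i) x (EuclideanSpace.single i 1)) = 0 := by
      rw [integral_finset_sum Finset.univ (fun i _ => hTint i)]
      exact Finset.sum_eq_zero fun i _ => hibp i
    have hGR0 : (∫ x, G x) + (∫ x, R x) = 0 := by
      rw [← integral_add hGint hRint]
      rw [← hSsum0]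
      exact integral_congr_ae (Filter.Eventually.of_forall fun x => (hglobal x).symm)
    have hmono : ∫ x, -R x ≤ ∫ x, ((1/2) * G x + (2/(α-1)^2) * H x) :=
      integral_mono hRint.neg ((hGint.const_mul _).add (hHint.const_mul _)) hPW
    rw [integral_neg] at hmono
    have hsplit : ∫ x, ((1/2) * G x + (2/(α-1)^2) * H x)
        = (1/2) * (∫ x, G x) + (2/(α-1)^2) * (∫ x, H x) := by
      rw [integral_add (hGint.const_mul _) (hHint.const_mul _), integral_const_mul,
        integral_const_mul]
    rw [hsplit] at hmono
    have hfinal : (∫ x, G x) ≤ (2/(α-1))^2 * (∫ x, H x) := by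
      have hc : (2/(α-1))^2 = 4/(α-1)^2 := by rw [div_pow]; norm_num
      rw [hc]
      have h4 : (4:ℝ)/(α-1)^2 = 2 * (2/(α-1)^2) := by ring
      rw [h4]
      linarith
    have hGU0 : ∀ x ∉ U, G x = 0 := fun x hx => hG0 x (fun h => hx (hVU (hfs h)))
    have hHU0 : ∀ x ∉ U, H x = 0 := fun x hx => hH0 x (fun h => hx (hVU (hfs h)))
    rw [← setIntegral_eq_integral_of_forall_compl_eq_zero hGU0,
      ← setIntegral_eq_integral_of_forall_compl_eq_zero hHU0] at hfinal
    exact hfinal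
  refine ⟨key, fun f hf hfc hfs => ?_⟩
  have h := key 0 (by norm_num) f hf hfc hfs
  simp only [Real.rpow_zero, one_mul] at h
  norm_num at h
  exact h
end

section
/- Let U ⊆ ℝ^m be open, Q < 2, α ≤ 0 with Q + α ≠ 2, and let ψ be a smooth strictly positive function on U satisfying the Laplacian upper bound Δψ ≤ (Q−1)·|∇ψ|²/ψ on U. Then for every f ∈ C_c^∞(U) the weighted Hardy inequality ∫_U ψ^α·(|∇ψ|²/ψ²)·f² dx ≤ (2/(Q+α−2))²·∫_U ψ^α·|∇f|² dx holds. -/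
open Real MeasureTheory

variable {m : ℕ}

local notation "X" => EuclideanSpace ℝ (Fin m)

private noncomputable def ee (i : Fin m) : EuclideanSpace ℝ (Fin m) := EuclideanSpace.single i 1

lemma integral_fderiv_apply_eq_zero {F : EuclideanSpace ℝ (Fin m) → ℝ}
    (hF : ContDiff ℝ 1 F) (hsupp : HasCompactSupport F) (v : EuclideanSpace ℝ (Fin m)) :
    ∫ x, fderiv ℝ F x v = 0 := by
  obtain ⟨C, hC⟩ := ContDiff.lipschitzWith_of_hasCompactSupport hsupp hF one_ne_zero
  have h1 : LipschitzWith 0 (fun _ : EuclideanSpace ℝ (Fin m) => (1 : ℝ)) :=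
    LipschitzWith.const 1
  have key := h1.integral_lineDeriv_mul_eq (μ := volume) hC hsupp (-v)
  have e1 : ∀ x : EuclideanSpace ℝ (Fin m), lineDeriv ℝ (fun _ => (1:ℝ)) x (-v) = 0 := by
    intro x
    rw [(differentiableAt_const (1:ℝ)).lineDeriv_eq_fderiv]
    simp
  have e2 : ∀ x : EuclideanSpace ℝ (Fin m), lineDeriv ℝ F x (- -v) = fderiv ℝ F x v := by
    intro x
    rw [neg_neg, ((hF.differentiable one_ne_zero) x).lineDeriv_eq_fderiv]
  simp only [e1, zero_mul, integral_zero, e2, mul_one] at key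
  exact key.symm

lemma gradient_inner_eq (g : EuclideanSpace ℝ (Fin m) → ℝ) (x v : EuclideanSpace ℝ (Fin m)) :
    (inner ℝ (gradient g x) v : ℝ) = fderiv ℝ g x v :=
  InnerProductSpace.toDual_symm_apply

lemma gradient_coord (g : EuclideanSpace ℝ (Fin m) → ℝ) (x : EuclideanSpace ℝ (Fin m)) (i : Fin m) :
    gradient g x i = fderiv ℝ g x (ee i) := by
  have := gradient_inner_eq g x (ee i)
  rw [ee, EuclideanSpace.inner_single_right] at this
  simpa [ee] using this

lemma gradient_inner_sum (g h : EuclideanSpace ℝ (Fin m) → ℝ) (x : EuclideanSpace ℝ (Fin m)) :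
    (inner ℝ (gradient g x) (gradient h x) : ℝ)
      = ∑ i, fderiv ℝ g x (ee i) * fderiv ℝ h x (ee i) := by
  rw [PiLp.inner_apply]
  refine Finset.sum_congr rfl fun i _ => ?_
  rw [RCLike.inner_apply, gradient_coord, gradient_coord]
  simp [mul_comm]

lemma gradient_normsq (g : EuclideanSpace ℝ (Fin m) → ℝ) (x : EuclideanSpace ℝ (Fin m)) :
    ‖gradient g x‖ ^ 2 = ∑ i, fderiv ℝ g x (ee i) * fderiv ℝ g x (ee i) := by
  rw [← real_inner_self_eq_norm_sq, gradient_inner_sum]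

lemma lap_eq (g : EuclideanSpace ℝ (Fin m) → ℝ) (x : EuclideanSpace ℝ (Fin m)) :
    lap g x = ∑ i, fderiv ℝ (fun y => fderiv ℝ g y (ee i)) x (ee i) := rfl
set_option maxHeartbeats 1000000 in
theorem weighted_hardy_from_laplacian_upper_bound {m : ℕ}
    (U : Set (EuclideanSpace ℝ (Fin m))) (hU : IsOpen U)
    (Q α : ℝ) (hQ : Q < 2) (hα : α ≤ 0) (hQα : Q + α ≠ 2)
    (ψ : EuclideanSpace ℝ (Fin m) → ℝ)
    (hψ : ContDiffOn ℝ (⊤ : ℕ∞) ψ U) (hψpos : ∀ x ∈ U, 0 < ψ x)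
    (hψupper : ∀ x ∈ U, lap ψ x ≤ (Q - 1) / ψ x * ‖gradient ψ x‖ ^ 2) :
    ∀ f : EuclideanSpace ℝ (Fin m) → ℝ,
      ContDiff ℝ (⊤ : ℕ∞) f → HasCompactSupport f → tsupport f ⊆ U →
      ∫ x in U, ψ x ^ α * (‖gradient ψ x‖ ^ 2 / (ψ x) ^ 2) * (f x) ^ 2
        ≤ (2 / (Q + α - 2)) ^ 2 * ∫ x in U, ψ x ^ α * ‖gradient f x‖ ^ 2 := by
  intro f hf hfc hfU
  classical
  -- numeric setup
  have hQα2 : Q + α < 2 := by linarith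
  set ε : ℝ := (2 - (Q + α)) / 2 with hεdef
  have hε : 0 < ε := by rw [hεdef]; linarith
  -- smoothness facts
  have hψx : ∀ x ∈ U, ContDiffAt ℝ 3 ψ x := fun x hx =>
    (hψ.contDiffAt (hU.mem_nhds hx)).of_le (by exact WithTop.coe_le_coe.mpr le_top)
  have hψ1 : ∀ x ∈ U, ContDiffAt ℝ 1 ψ x := fun x hx => (hψx x hx).of_le (by norm_num)
  have hDψ : ∀ x ∈ U, ContDiffAt ℝ 2 (fderiv ℝ ψ) x := fun x hx =>
    (hψx x hx).fderiv_right (by norm_num)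
  have hgi : ∀ x ∈ U, ∀ i : Fin m, ContDiffAt ℝ 2 (fun y => fderiv ℝ ψ y (ee i)) x :=
    fun x hx i => (hDψ x hx).clm_apply contDiffAt_const
  have hgi' : ∀ x ∈ U, ∀ i : Fin m,
      ContinuousAt (fun y => fderiv ℝ (fun z => fderiv ℝ ψ z (ee i)) y (ee i)) x :=
    fun x hx i =>
      (((hgi x hx i).fderiv_right (m := 1) (by norm_num)).clm_apply contDiffAt_const).continuousAt
  have hrp : ∀ (p : ℝ), ∀ x ∈ U, ContinuousAt (fun y => ψ y ^ p) x := fun p x hx =>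
    ((hψ1 x hx).rpow_const_of_ne (hψpos x hx).ne').continuousAt
  have hgradψc : ∀ x ∈ U, ContinuousAt (gradient ψ) x := fun x hx =>
    ((InnerProductSpace.toDual ℝ _).symm.continuous.continuousAt).comp (hDψ x hx).continuousAt
  have hlapc : ∀ x ∈ U, ContinuousAt (lap ψ) x := by
    intro x hx
    exact tendsto_finset_sum _ fun i _ => hgi' x hx i
  have hfc1 : ContDiff ℝ 1 f := hf.of_le (by simp)
  have hfd : ∀ x, DifferentiableAt ℝ f x := fun x => (hfc1.differentiable one_ne_zero) x
  have hgradfc : Continuous (gradient f) :=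
    (InnerProductSpace.toDual ℝ _).symm.continuous.comp (hfc1.continuous_fderiv one_ne_zero)
  have hf0 : ∀ x ∉ tsupport f, f x = 0 := fun x hx => image_eq_zero_of_notMem_tsupport hx
  have hfderiv0 : ∀ x ∉ tsupport f, fderiv ℝ f x = 0 := by
    intro x hx
    have h := notMem_tsupport_iff_eventuallyEq.1 hx
    rw [h.fderiv_eq]
    exact fderiv_const_apply 0
  have hgradf0 : ∀ x ∉ tsupport f, gradient f x = 0 := by
    intro x hx
    show (InnerProductSpace.toDual ℝ _).symm (fderiv ℝ f x) = 0
    rw [hfderiv0 x hx]; simp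
  -- gluing lemma for integrability
  have glue : ∀ G : EuclideanSpace ℝ (Fin m) → ℝ,
      (∀ x ∈ U, ContinuousAt G x) → (∀ x ∉ tsupport f, G x = 0) → Integrable G := by
    intro G h1 h2
    have hc : Continuous G := by
      rw [continuous_iff_continuousAt]
      intro x
      by_cases hx : x ∈ U
      · exact h1 x hx
      · have hxK : x ∉ tsupport f := fun h => hx (hfU h)
        have hev : (fun _ : EuclideanSpace ℝ (Fin m) => (0:ℝ)) =ᶠ[nhds x] G := by
          filter_upwards [(isClosed_tsupport f).isOpen_compl.mem_nhds hxK] with y hy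
          exact (h2 y hy).symm
        exact ContinuousAt.congr continuousAt_const hev
    exact hc.integrable_of_hasCompactSupport
      (hfc.mono' fun x hx => by
        by_contra hxK
        exact hx (h2 x hxK))
  -- integrability of the four integrands
  have hg1i : Integrable (fun x => ψ x ^ (α-2) * (‖gradient ψ x‖^2 * (f x * f x))) := by
    refine glue _ (fun x hx => ?_) (fun x hx => by simp [hf0 x hx])
    exact (hrp _ x hx).mul
      (((hgradψc x hx).norm.pow 2).mul
        ((hf.continuous.continuousAt).mul hf.continuous.continuousAt))
  have hg2i : Integrable (fun x =>
      ψ x ^ (α-1) * (f x * (inner ℝ (gradient f x) (gradient ψ x) : ℝ))) := by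
    refine glue _ (fun x hx => ?_) (fun x hx => by simp [hf0 x hx])
    exact (hrp _ x hx).mul
      ((hf.continuous.continuousAt).mul
        ((hgradfc.continuousAt).inner (hgradψc x hx)))
  have hg3i : Integrable (fun x => ψ x ^ (α-1) * ((f x * f x) * lap ψ x)) := by
    refine glue _ (fun x hx => ?_) (fun x hx => by simp [hf0 x hx])
    exact (hrp _ x hx).mul
      (((hf.continuous.continuousAt).mul hf.continuous.continuousAt).mul (hlapc x hx))
  have hg4i : Integrable (fun x => ψ x ^ α * ‖gradient f x‖^2) := by
    refine glue _ (fun x hx => ?_) (fun x hx => by simp [hgradf0 x hx])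
    exact (hrp _ x hx).mul (hgradfc.continuousAt.norm.pow 2)
  -- the vector field components
  set Fv : Fin m → EuclideanSpace ℝ (Fin m) → ℝ :=
    fun i y => (ψ y ^ (α-1) * (f y * f y)) * fderiv ℝ ψ y (ee i) with hFvdef
  have hFv0 : ∀ i, ∀ x ∉ tsupport f, Fv i x = 0 := by
    intro i x hx; simp [hFvdef, hf0 x hx]
  have hFC1 : ∀ i, ContDiff ℝ 1 (Fv i) := by
    intro i
    rw [contDiff_iff_contDiffAt]
    intro x
    by_cases hx : x ∈ U
    · exact (((hψ1 x hx).rpow_const_of_ne (hψpos x hx).ne').mul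
        ((hfc1.contDiffAt).mul hfc1.contDiffAt)).mul ((hgi x hx i).of_le (by norm_num))
    · have hxK : x ∉ tsupport f := fun h => hx (hfU h)
      refine (contDiffAt_const (c := (0:ℝ))).congr_of_eventuallyEq ?_
      filter_upwards [(isClosed_tsupport f).isOpen_compl.mem_nhds hxK] with y hy
      exact hFv0 i y hy
  have hFsupp : ∀ i, HasCompactSupport (Fv i) := by
    intro i
    refine hfc.mono' fun x hx => ?_
    by_contra hxK
    exact hx (hFv0 i x hxK)
  have hdiv0 : ∀ i, ∀ x ∉ tsupport f, fderiv ℝ (Fv i) x = 0 := by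
    intro i x hx
    have hev : Fv i =ᶠ[nhds x] (fun _ => (0:ℝ)) := by
      filter_upwards [(isClosed_tsupport f).isOpen_compl.mem_nhds hx] with y hy
      exact hFv0 i y hy
    rw [hev.fderiv_eq]
    simp
  -- divergence computation on U
  have hdiv : ∀ x ∈ U, (∑ i, fderiv ℝ (Fv i) x (ee i)) =
      (α-1) * (ψ x ^ (α-2) * (‖gradient ψ x‖^2 * (f x * f x)))
      + 2 * (ψ x ^ (α-1) * (f x * (inner ℝ (gradient f x) (gradient ψ x) : ℝ)))
      + ψ x ^ (α-1) * ((f x * f x) * lap ψ x) := by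
    intro x hx
    have hψd : HasFDerivAt ψ (fderiv ℝ ψ x) x := ((hψ1 x hx).differentiableAt one_ne_zero).hasFDerivAt
    have hfd' : HasFDerivAt f (fderiv ℝ f x) x := (hfd x).hasFDerivAt
    have h1 : HasFDerivAt (fun y => ψ y ^ (α-1))
        (((α-1) * ψ x ^ (α-1-1)) • fderiv ℝ ψ x) x :=
      hψd.rpow_const (Or.inl (hψpos x hx).ne')
    have h2 : HasFDerivAt (fun y => f y * f y)
        (f x • fderiv ℝ f x + f x • fderiv ℝ f x) x := hfd'.mul hfd'
    have hφ : HasFDerivAt (fun y => ψ y ^ (α-1) * (f y * f y))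
        ((ψ x ^ (α-1)) • (f x • fderiv ℝ f x + f x • fderiv ℝ f x)
          + (f x * f x) • (((α-1) * ψ x ^ (α-1-1)) • fderiv ℝ ψ x)) x := h1.mul h2
    have hFiD : ∀ i, fderiv ℝ (Fv i) x =
        (ψ x ^ (α-1) * (f x * f x)) • fderiv ℝ (fun y => fderiv ℝ ψ y (ee i)) x
          + (fderiv ℝ ψ x (ee i)) •
            ((ψ x ^ (α-1)) • (f x • fderiv ℝ f x + f x • fderiv ℝ f x)
              + (f x * f x) • (((α-1) * ψ x ^ (α-1-1)) • fderiv ℝ ψ x)) := by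
      intro i
      have hgd : HasFDerivAt (fun y => fderiv ℝ ψ y (ee i))
          (fderiv ℝ (fun y => fderiv ℝ ψ y (ee i)) x) x :=
        (((hgi x hx i).of_le (by norm_num)).differentiableAt one_ne_zero).hasFDerivAt
      exact (hφ.mul hgd).fderiv
    calc (∑ i, fderiv ℝ (Fv i) x (ee i))
        = ∑ i, ((ψ x ^ (α-1) * (f x * f x)) *
              (fderiv ℝ (fun y => fderiv ℝ ψ y (ee i)) x (ee i))
            + (2 * (ψ x ^ (α-1) * f x)) * (fderiv ℝ f x (ee i) * fderiv ℝ ψ x (ee i))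
            + ((α-1) * (ψ x ^ (α-2) * (f x * f x))) *
              (fderiv ℝ ψ x (ee i) * fderiv ℝ ψ x (ee i))) := by
          refine Finset.sum_congr rfl fun i _ => ?_
          rw [hFiD i]
          simp only [ContinuousLinearMap.add_apply, ContinuousLinearMap.smul_apply,
            smul_eq_mul]
          rw [show α - 1 - 1 = α - 2 by ring]
          ring
      _ = (ψ x ^ (α-1) * (f x * f x)) *
              (∑ i, fderiv ℝ (fun y => fderiv ℝ ψ y (ee i)) x (ee i))
            + (2 * (ψ x ^ (α-1) * f x)) * (∑ i, fderiv ℝ f x (ee i) * fderiv ℝ ψ x (ee i))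
            + ((α-1) * (ψ x ^ (α-2) * (f x * f x))) *
              (∑ i, fderiv ℝ ψ x (ee i) * fderiv ℝ ψ x (ee i)) := by
          rw [Finset.sum_add_distrib, Finset.sum_add_distrib, ← Finset.mul_sum,
            ← Finset.mul_sum, ← Finset.mul_sum]
      _ = _ := by
          rw [← lap_eq, ← gradient_inner_sum, ← gradient_normsq]
          ring
  -- integrability of divergence pieces
  have hFint : ∀ i, Integrable (fun x => fderiv ℝ (Fv i) x (ee i)) := by
    intro i
    have hc : Continuous (fun x => fderiv ℝ (Fv i) x (ee i)) :=
      ((hFC1 i).continuous_fderiv one_ne_zero).clm_apply continuous_const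
    refine hc.integrable_of_hasCompactSupport (hfc.mono' fun x hx => ?_)
    by_contra hxK
    exact hx (show fderiv ℝ (Fv i) x (ee i) = 0 by rw [hdiv0 i x hxK]; simp)
  -- the divergence identity, globally
  have hGeq : ∀ x, ((α-1) * (ψ x ^ (α-2) * (‖gradient ψ x‖^2 * (f x * f x)))
      + 2 * (ψ x ^ (α-1) * (f x * (inner ℝ (gradient f x) (gradient ψ x) : ℝ)))
      + ψ x ^ (α-1) * ((f x * f x) * lap ψ x))
      = ∑ i, fderiv ℝ (Fv i) x (ee i) := by
    intro x
    by_cases hx : x ∈ U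
    · exact (hdiv x hx).symm
    · have hxK : x ∉ tsupport f := fun h => hx (hfU h)
      rw [Finset.sum_eq_zero (fun i _ => by rw [hdiv0 i x hxK]; simp)]
      simp [hf0 x hxK]
  -- total integral of the divergence vanishes
  have hzero : ∫ x, ((α-1) * (ψ x ^ (α-2) * (‖gradient ψ x‖^2 * (f x * f x)))
      + 2 * (ψ x ^ (α-1) * (f x * (inner ℝ (gradient f x) (gradient ψ x) : ℝ)))
      + ψ x ^ (α-1) * ((f x * f x) * lap ψ x)) = 0 := by
    calc ∫ x, ((α-1) * (ψ x ^ (α-2) * (‖gradient ψ x‖^2 * (f x * f x)))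
        + 2 * (ψ x ^ (α-1) * (f x * (inner ℝ (gradient f x) (gradient ψ x) : ℝ)))
        + ψ x ^ (α-1) * ((f x * f x) * lap ψ x))
        = ∫ x, ∑ i, fderiv ℝ (Fv i) x (ee i) :=
          integral_congr_ae (Filter.Eventually.of_forall hGeq)
      _ = ∑ i, ∫ x, fderiv ℝ (Fv i) x (ee i) :=
          integral_finset_sum _ (fun i _ => hFint i)
      _ = 0 := Finset.sum_eq_zero fun i _ =>
          integral_fderiv_apply_eq_zero (hFC1 i) (hFsupp i) (ee i)
  -- convert to an integral over U
  have hU0 : ∀ G : EuclideanSpace ℝ (Fin m) → ℝ, (∀ x ∉ tsupport f, G x = 0) →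
      ∫ x in U, G x = ∫ x, G x := fun G h =>
    setIntegral_eq_integral_of_forall_compl_eq_zero
      (fun x hx => h x (fun hK => hx (hfU hK)))
  have hkey : (α-1) * (∫ x in U, ψ x ^ (α-2) * (‖gradient ψ x‖^2 * (f x * f x)))
      + 2 * (∫ x in U, ψ x ^ (α-1) * (f x * (inner ℝ (gradient f x) (gradient ψ x) : ℝ)))
      + (∫ x in U, ψ x ^ (α-1) * ((f x * f x) * lap ψ x)) = 0 := by
    have h1 : ∫ x in U, ((α-1) * (ψ x ^ (α-2) * (‖gradient ψ x‖^2 * (f x * f x)))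
        + 2 * (ψ x ^ (α-1) * (f x * (inner ℝ (gradient f x) (gradient ψ x) : ℝ)))
        + ψ x ^ (α-1) * ((f x * f x) * lap ψ x)) = 0 := by
      rw [hU0 _ (fun x hx => by simp [hf0 x hx])]
      exact hzero
    have i1 : Integrable (fun x : EuclideanSpace ℝ (Fin m) =>
        (α-1) * (ψ x ^ (α-2) * (‖gradient ψ x‖^2 * (f x * f x)))) (volume.restrict U) :=
      (hg1i.integrableOn).const_mul _
    have i2 : Integrable (fun x : EuclideanSpace ℝ (Fin m) =>
        2 * (ψ x ^ (α-1) * (f x * (inner ℝ (gradient f x) (gradient ψ x) : ℝ)))) (volume.restrict U) :=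
      (hg2i.integrableOn).const_mul _
    have i12 : Integrable (fun x : EuclideanSpace ℝ (Fin m) =>
        (α-1) * (ψ x ^ (α-2) * (‖gradient ψ x‖^2 * (f x * f x)))
        + 2 * (ψ x ^ (α-1) * (f x * (inner ℝ (gradient f x) (gradient ψ x) : ℝ)))) (volume.restrict U) :=
      i1.add i2
    rw [integral_add i12 hg3i.integrableOn, integral_add i1 i2,
      integral_const_mul, integral_const_mul] at h1
    exact h1
  -- pointwise bound for the Laplacian term
  have hC3le : (∫ x in U, ψ x ^ (α-1) * ((f x * f x) * lap ψ x))
      ≤ (Q-1) * (∫ x in U, ψ x ^ (α-2) * (‖gradient ψ x‖^2 * (f x * f x))) := by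
    rw [← integral_const_mul]
    refine setIntegral_mono_on hg3i.integrableOn
      ((hg1i.integrableOn).const_mul _) hU.measurableSet (fun x hx => ?_)
    have hpos := hψpos x hx
    have h0 : 0 ≤ ψ x ^ (α-1) * (f x * f x) :=
      mul_nonneg (rpow_nonneg hpos.le _) (mul_self_nonneg _)
    have h1 : ψ x ^ (α-1) * (f x * f x) * lap ψ x
        ≤ ψ x ^ (α-1) * (f x * f x) * ((Q-1) / ψ x * ‖gradient ψ x‖^2) :=
      mul_le_mul_of_nonneg_left (hψupper x hx) h0
    have h2 : ψ x ^ (α-2) = ψ x ^ (α-1) / ψ x := by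
      rw [show α - 2 = (α-1) - 1 by ring, Real.rpow_sub_one hpos.ne']
    calc ψ x ^ (α-1) * ((f x * f x) * lap ψ x)
        = ψ x ^ (α-1) * (f x * f x) * lap ψ x := by ring
      _ ≤ ψ x ^ (α-1) * (f x * f x) * ((Q-1) / ψ x * ‖gradient ψ x‖^2) := h1
      _ = (Q-1) * (ψ x ^ (α-2) * (‖gradient ψ x‖^2 * (f x * f x))) := by
          rw [h2]; field_simp
  -- pointwise Cauchy-Schwarz/Young bound
  have key2 : ∀ u v : ℝ, 2*(u*v) ≤ ε*(u*u) + ε⁻¹*(v*v) := by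
    intro u v
    refine (mul_le_mul_iff_of_pos_right hε).mp ?_
    have hc : ε⁻¹ * ε = 1 := inv_mul_cancel₀ hε.ne'
    nlinarith [sq_nonneg (ε*u - v), inv_mul_cancel₀ hε.ne', sq_nonneg v, sq_nonneg u]
  have hBle : 2 * (∫ x in U, ψ x ^ (α-1) * (f x * (inner ℝ (gradient f x) (gradient ψ x) : ℝ)))
      ≤ ε * (∫ x in U, ψ x ^ (α-2) * (‖gradient ψ x‖^2 * (f x * f x)))
        + ε⁻¹ * (∫ x in U, ψ x ^ α * ‖gradient f x‖^2) := by
    rw [← integral_const_mul, ← integral_const_mul, ← integral_const_mul,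
      ← integral_add ((hg1i.integrableOn).const_mul _) ((hg4i.integrableOn).const_mul _)]
    refine setIntegral_mono_on (hg2i.integrableOn.const_mul _)
      (((hg1i.integrableOn).const_mul _).add ((hg4i.integrableOn).const_mul _))
      hU.measurableSet (fun x hx => ?_)
    have hpos := hψpos x hx
    set p : ℝ := ψ x ^ ((α-2)/2) with hpdef
    set q : ℝ := ψ x ^ (α/2) with hqdef
    have hp : 0 < p := Real.rpow_pos_of_pos hpos _
    have hq : 0 < q := Real.rpow_pos_of_pos hpos _
    have hpq : ψ x ^ (α-1) = p * q := by
      rw [hpdef, hqdef, ← Real.rpow_add hpos, show (α-2)/2 + α/2 = α - 1 by ring]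
    have hpp : ψ x ^ (α-2) = p * p := by
      rw [hpdef, ← Real.rpow_add hpos, show (α-2)/2 + (α-2)/2 = α - 2 by ring]
    have hqq : ψ x ^ α = q * q := by
      rw [hqdef, ← Real.rpow_add hpos, show α/2 + α/2 = α by ring]
    set S : ℝ := ‖gradient ψ x‖ with hSdef
    set Tn : ℝ := ‖gradient f x‖ with hTndef
    set T : ℝ := (inner ℝ (gradient f x) (gradient ψ x) : ℝ) with hTdef
    have hT : f x * T ≤ |f x| * (Tn * S) := by
      calc f x * T ≤ |f x * T| := le_abs_self _
        _ = |f x| * |T| := abs_mul _ _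
        _ ≤ |f x| * (Tn * S) :=
            mul_le_mul_of_nonneg_left (abs_real_inner_le_norm _ _) (abs_nonneg _)
    have hu2 : (p*(|f x| * S)) * (p*(|f x| * S)) = ψ x ^ (α-2) * (S^2 * (f x * f x)) := by
      rw [hpp, ← abs_mul_abs_self (f x), pow_two]; ring
    have hv2 : (q*Tn) * (q*Tn) = ψ x ^ α * Tn^2 := by
      rw [hqq, pow_two]; ring
    calc 2 * (ψ x ^ (α-1) * (f x * T))
        = 2 * ((p*q) * (f x * T)) := by rw [hpq]
      _ ≤ 2 * ((p*q) * (|f x| * (Tn * S))) := by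
          nlinarith [mul_nonneg hp.le hq.le, hT]
      _ = 2 * ((p*(|f x| * S)) * (q*Tn)) := by ring
      _ ≤ ε * ((p*(|f x| * S)) * (p*(|f x| * S))) + ε⁻¹ * ((q*Tn) * (q*Tn)) := key2 _ _
      _ = ε * (ψ x ^ (α-2) * (S^2 * (f x * f x))) + ε⁻¹ * (ψ x ^ α * Tn^2) := by
          rw [hu2, hv2]
  -- assemble
  set A : ℝ := ∫ x in U, ψ x ^ (α-2) * (‖gradient ψ x‖^2 * (f x * f x)) with hAdef
  set Cc : ℝ := ∫ x in U, ψ x ^ α * ‖gradient f x‖^2 with hCdef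
  have hfin : ε * A ≤ ε⁻¹ * Cc := by
    have h1 : (2 - (Q + α)) * A ≤
        2 * (∫ x in U, ψ x ^ (α-1) * (f x * (inner ℝ (gradient f x) (gradient ψ x) : ℝ))) := by
      linarith [hkey, hC3le]
    have h2 : 2 * ε = 2 - (Q + α) := by rw [hεdef]; ring
    have h3 : (2 * ε) * A ≤
        2 * (∫ x in U, ψ x ^ (α-1) * (f x * (inner ℝ (gradient f x) (gradient ψ x) : ℝ))) := by
      rw [h2]; exact h1
    linarith [hBle, h3]
  -- rewrite the goal
  have hgoal1 : ∫ x in U, ψ x ^ α * (‖gradient ψ x‖ ^ 2 / (ψ x) ^ 2) * (f x) ^ 2 = A := by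
    rw [hAdef]
    refine setIntegral_congr_fun hU.measurableSet (fun x hx => ?_)
    have hpos := hψpos x hx
    have h2 : ψ x ^ α / (ψ x)^2 = ψ x ^ (α - 2) := by
      rw [← Real.rpow_natCast (ψ x) 2, ← Real.rpow_sub hpos]
      norm_num
    calc ψ x ^ α * (‖gradient ψ x‖ ^ 2 / (ψ x) ^ 2) * (f x) ^ 2
        = (ψ x ^ α / (ψ x)^2) * (‖gradient ψ x‖^2 * (f x * f x)) := by ring
      _ = ψ x ^ (α-2) * (‖gradient ψ x‖^2 * (f x * f x)) := by rw [h2]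
  rw [hgoal1]
  -- final arithmetic
  have hconst : (2 / (Q + α - 2)) ^ 2 = ε⁻¹ * ε⁻¹ := by
    rw [pow_two, show Q + α - 2 = -(2 - (Q + α)) by ring, div_neg, neg_mul_neg,
      hεdef, inv_div]
  rw [hconst]
  have hA : A ≤ ε⁻¹ * (ε⁻¹ * Cc) := by
    have h1 : ε⁻¹ * (ε * A) ≤ ε⁻¹ * (ε⁻¹ * Cc) :=
      mul_le_mul_of_nonneg_left hfin (inv_nonneg.2 hε.le)
    rwa [← mul_assoc, inv_mul_cancel₀ hε.ne', one_mul] at h1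
  calc A ≤ ε⁻¹ * (ε⁻¹ * Cc) := hA
    _ = ε⁻¹ * ε⁻¹ * Cc := by ring
end

section
/- Let m ≥ 1 and α ∈ ℝ with m + α ≠ 2. Then for every f ∈ C_c^∞(ℝ^m \ {0}) the weighted Euclidean Hardy inequality ∫_{ℝ^m} |x|^{α−2}·f(x)² dx ≤ (2/(m+α−2))²·∫_{ℝ^m} |x|^α·|∇f(x)|² dx holds. -/
open Real MeasureTheory Manifold ContDiff

private lemma hardy_amgm (t p q d r : ℝ) (ht : 0 < t) (hp : 0 ≤ p) :
    p * (2 * q * (r * d)) ≤ t * (p * q ^ 2) + 1 / t * (p * d ^ 2 * r ^ 2) := by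
  have htne : t ≠ 0 := ne_of_gt ht
  have hkey : 0 ≤ (p / t) * (t * q - d * r) ^ 2 := by positivity
  have hE : t * (p * q ^ 2) + 1 / t * (p * d ^ 2 * r ^ 2) - p * (2 * q * (r * d))
      = (p / t) * (t * q - d * r) ^ 2 := by
    field_simp
    ring
  linarith [hkey, hE]

set_option maxHeartbeats 1000000 in
theorem weighted_euclidean_hardy_inequality (m : ℕ) (hm : 1 ≤ m)
    (α : ℝ) (hα : (m : ℝ) + α ≠ 2)
    (f : EuclideanSpace ℝ (Fin m) → ℝ)
    (hf : ContDiff ℝ (⊤ : ℕ∞) f) (hsupp : HasCompactSupport f)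
    (h0 : tsupport f ⊆ {x : EuclideanSpace ℝ (Fin m) | x ≠ 0}) :
    ∫ x : EuclideanSpace ℝ (Fin m), ‖x‖ ^ (α - 2) * (f x) ^ 2
      ≤ (2 / ((m : ℝ) + α - 2)) ^ 2
        * ∫ x : EuclideanSpace ℝ (Fin m), ‖x‖ ^ α * ‖gradient f x‖ ^ 2 := by
  classical
  set c : ℝ := (m : ℝ) + α - 2 with hc_def
  set β : ℝ := α - 2 with hβ_def
  have hc : c ≠ 0 := sub_ne_zero.mpr hα
  have hc' : 0 < |c| := abs_pos.mpr hc
  -- basic smoothness facts about f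
  have hfd : Differentiable ℝ f := hf.differentiable (by simp)
  have hfc : Continuous (fun x => fderiv ℝ f x) := hf.continuous_fderiv (by simp)
  have hf0 : ∀ x, x ∉ tsupport f → f x = 0 := fun x hx => image_eq_zero_of_notMem_tsupport hx
  have hfd0 : ∀ x, x ∉ tsupport f → fderiv ℝ f x = 0 := by
    intro x hx
    by_contra h
    exact hx (support_fderiv_subset ℝ h)
  -- a positive radius below the support
  have h0K : (0 : EuclideanSpace ℝ (Fin m)) ∉ tsupport f := fun h => (h0 h) rfl
  obtain ⟨ε, hε, hball⟩ : ∃ ε > 0, Metric.ball (0 : EuclideanSpace ℝ (Fin m)) ε ⊆ (tsupport f)ᶜ :=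
    Metric.isOpen_iff.1 (isClosed_tsupport f).isOpen_compl 0 h0K
  have hKnorm : ∀ x ∈ tsupport f, ε ≤ ‖x‖ := by
    intro x hx
    by_contra h
    exact hball (by simpa [Metric.mem_ball, dist_zero_right] using lt_of_not_ge h) hx
  -- smooth cutoff
  obtain ⟨χ, hχsm, hχ0, hχ1, hχ01⟩ :
      ∃ χ : EuclideanSpace ℝ (Fin m) → ℝ, ContDiff ℝ ∞ χ ∧
        (∀ x, ‖x‖ ≤ ε / 3 → χ x = 0) ∧ (∀ x, ε / 2 ≤ ‖x‖ → χ x = 1) ∧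
        ∀ x, χ x ∈ Set.Icc (0 : ℝ) 1 := by
    obtain ⟨χ, h0', h1', h01⟩ := exists_contMDiffMap_zero_one_of_isClosed (n := (⊤ : ℕ∞))
      (𝓘(ℝ, EuclideanSpace ℝ (Fin m)))
      (Metric.isClosed_closedBall (x := (0 : EuclideanSpace ℝ (Fin m))) (ε := ε / 3))
      (Metric.isOpen_ball (x := (0 : EuclideanSpace ℝ (Fin m))) (ε := ε / 2)).isClosed_compl
      (by
        rw [Set.disjoint_left]
        intro x hx hx2
        simp only [Metric.mem_closedBall, Set.mem_compl_iff, Metric.mem_ball, not_lt,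
          dist_zero_right] at hx hx2
        linarith)
    refine ⟨χ, χ.contMDiff.contDiff, fun x hx => h0' ?_, fun x hx => h1' ?_, h01⟩
    · simpa [Metric.mem_closedBall, dist_zero_right] using hx
    · simp only [Set.mem_compl_iff, Metric.mem_ball, dist_zero_right, not_lt]
      exact hx
  -- the globally smooth weights
  set w : ℝ → EuclideanSpace ℝ (Fin m) → ℝ := fun γ x => χ x * (‖x‖ ^ 2) ^ (γ / 2) with hw_def
  have hw_sm : ∀ γ, ContDiff ℝ ∞ (w γ) := by
    intro γ
    rw [contDiff_iff_contDiffAt]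
    intro x
    rcases lt_or_ge ‖x‖ (ε / 3) with hx | hx
    · apply ContDiffAt.congr_of_eventuallyEq (contDiffAt_const (c := (0 : ℝ)))
      have hmem : Metric.ball (0 : EuclideanSpace ℝ (Fin m)) (ε / 3) ∈ nhds x :=
        Metric.isOpen_ball.mem_nhds (by simpa [Metric.mem_ball, dist_zero_right] using hx)
      filter_upwards [hmem] with y hy
      have : χ y = 0 := hχ0 y (le_of_lt (by simpa [Metric.mem_ball, dist_zero_right] using hy))
      simp [hw_def, this]
    · have hx0 : x ≠ 0 := by
        intro h
        rw [h, norm_zero] at hx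
        linarith
      exact hχsm.contDiffAt.mul
        (((contDiff_norm_sq ℝ (E := EuclideanSpace ℝ (Fin m))).contDiffAt).rpow_const_of_ne
          (pow_ne_zero 2 (norm_ne_zero_iff.mpr hx0)))
  have hw_cont : ∀ γ, Continuous (w γ) := fun γ => (hw_sm γ).continuous
  have hw_diff : ∀ γ, Differentiable ℝ (w γ) := fun γ => (hw_sm γ).differentiable (by
    simp)
  have hw_nonneg : ∀ γ x, 0 ≤ w γ x := by
    intro γ x
    exact mul_nonneg (hχ01 x).1 (Real.rpow_nonneg (by positivity) _)
  -- on the support, the weight is the power of the norm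
  have hw_on : ∀ γ x, ε / 2 ≤ ‖x‖ → w γ x = ‖x‖ ^ γ := by
    intro γ x hx
    have h1 : χ x = 1 := hχ1 x hx
    rw [hw_def]
    simp only [h1, one_mul]
    rw [← Real.rpow_natCast ‖x‖ 2, ← Real.rpow_mul (norm_nonneg x)]
    push_cast
    rw [show (2 : ℝ) * (γ / 2) = γ by ring]
  have hw_supp : ∀ γ x, x ∈ tsupport f → w γ x = ‖x‖ ^ γ := by
    intro γ x hx
    exact hw_on γ x (le_trans (by linarith) (hKnorm x hx))
  -- derivative of the weight on a neighborhood of the support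
  have hw_fderiv : ∀ γ x, x ∈ tsupport f →
      fderiv ℝ (w γ) x = ((γ / 2) * (‖x‖ ^ 2) ^ (γ / 2 - 1)) • (2 • (innerSL ℝ x)) := by
    intro γ x hx
    have hxε : ε ≤ ‖x‖ := hKnorm x hx
    have hx0 : x ≠ 0 := by
      intro h
      rw [h, norm_zero] at hxε
      linarith
    have hD : HasFDerivAt (fun y : EuclideanSpace ℝ (Fin m) => (‖y‖ ^ 2) ^ (γ / 2))
        (((γ / 2) * (‖x‖ ^ 2) ^ (γ / 2 - 1)) • (2 • (innerSL ℝ x))) x := by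
      have := (Real.hasDerivAt_rpow_const (x := ‖x‖ ^ 2) (p := γ / 2)
        (Or.inl (pow_ne_zero 2 (norm_ne_zero_iff.mpr hx0)))).comp_hasFDerivAt x
        (hasStrictFDerivAt_norm_sq x).hasFDerivAt
      exact this
    have hev : w γ =ᶠ[nhds x] fun y => (‖y‖ ^ 2) ^ (γ / 2) := by
      have hU : {y : EuclideanSpace ℝ (Fin m) | ε / 2 < ‖y‖} ∈ nhds x := by
        apply (isOpen_lt continuous_const continuous_norm).mem_nhds
        simp only [Set.mem_setOf_eq]
        linarith
      filter_upwards [hU] with y hy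
      have : χ y = 1 := hχ1 y (le_of_lt hy)
      simp [hw_def, this]
    rw [Filter.EventuallyEq.fderiv_eq hev]
    exact hD.fderiv
  -- integrability helper
  have hint : ∀ g : EuclideanSpace ℝ (Fin m) → ℝ, Continuous g →
      (∀ x, x ∉ tsupport f → g x = 0) → Integrable g := by
    intro g hg hgs
    apply hg.integrable_of_hasCompactSupport
    apply hsupp.mono'
    intro x hx
    by_contra h
    exact hx (hgs x h)
  -- coordinate functions
  set e : Fin m → EuclideanSpace ℝ (Fin m) := fun i => EuclideanSpace.single i (1 : ℝ) with he_def
  have he_self : ∀ i, (e i) i = 1 := by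
    intro i; simp [he_def, EuclideanSpace.single_apply]
  have hsum_repr : ∀ x : EuclideanSpace ℝ (Fin m), ∑ i, x i • e i = x := by
    intro x
    ext j
    have : (∑ i, x i • e i) j = EuclideanSpace.proj (𝕜 := ℝ) j (∑ i, x i • e i) := rfl
    rw [this, map_sum]
    simp [he_def, EuclideanSpace.single_apply]
  -- G = f^2 and its derivative
  set G : EuclideanSpace ℝ (Fin m) → ℝ := fun x => f x * f x with hG_def
  have hGsm : ContDiff ℝ ∞ G := hf.mul hf
  have hGd : Differentiable ℝ G := hGsm.differentiable (by simp)
  have hGfd : ∀ x, fderiv ℝ G x = (2 * f x) • fderiv ℝ f x := by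
    intro x
    rw [hG_def]
    rw [fderiv_fun_mul (hfd x) (hfd x)]
    ext v
    simp
    ring
  have hG0 : ∀ x, x ∉ tsupport f → G x = 0 := by
    intro x hx; simp [hG_def, hf0 x hx]
  -- the i-th vector field component
  set F : Fin m → EuclideanSpace ℝ (Fin m) → ℝ := fun i x => w β x * x i with hF_def
  have hproj_diff : ∀ i : Fin m, Differentiable ℝ
      (fun x : EuclideanSpace ℝ (Fin m) => x i) :=
    fun i => (EuclideanSpace.proj (𝕜 := ℝ) i).differentiable
  have hproj_fderiv : ∀ (i : Fin m) (x : EuclideanSpace ℝ (Fin m)),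
      fderiv ℝ (fun y : EuclideanSpace ℝ (Fin m) => y i) x = EuclideanSpace.proj (𝕜 := ℝ) i :=
    fun i x => (EuclideanSpace.proj (𝕜 := ℝ) i).fderiv
  have hFd : ∀ i, Differentiable ℝ (F i) := fun i => (hw_diff β).mul (hproj_diff i)
  have hFc : ∀ i, Continuous (F i) := fun i => (hFd i).continuous
  -- continuity of x ↦ fderiv G x v and x ↦ fderiv (F i) x v
  have hGfd_cont : ∀ v : EuclideanSpace ℝ (Fin m),
      Continuous fun x => fderiv ℝ G x v := by
    intro v
    exact (hGsm.continuous_fderiv (by simp)).clm_apply continuous_const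
  have hFfd_cont : ∀ (i : Fin m) (v : EuclideanSpace ℝ (Fin m)),
      Continuous fun x => fderiv ℝ (F i) x v := by
    intro i v
    exact (((hw_sm β).mul ((EuclideanSpace.proj (𝕜 := ℝ) i).contDiff)).continuous_fderiv
      (by simp)).clm_apply continuous_const
  -- integration by parts in each coordinate
  have IBP : ∀ i : Fin m,
      ∫ x, F i x * fderiv ℝ G x (e i) = - ∫ x, fderiv ℝ (F i) x (e i) * G x := by
    intro i
    apply integral_mul_fderiv_eq_neg_fderiv_mul_of_integrable
    · apply hint _ ((hFfd_cont i (e i)).mul hGd.continuous)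
      intro x hx
      simp [hG0 x hx]
    · apply hint _ ((hFc i).mul (hGfd_cont (e i)))
      intro x hx
      have : fderiv ℝ G x = 0 := by rw [hGfd x, hf0 x hx]; simp
      simp [this]
    · apply hint _ ((hFc i).mul hGd.continuous)
      intro x hx
      simp [hG0 x hx]
    · exact fun x _ => hFd i x
    · exact fun x _ => hGd x
  -- value identities for powers
  have hsq_rpow : ∀ (γ : ℝ) (x : EuclideanSpace ℝ (Fin m)),
      ((‖x‖ ^ 2 : ℝ)) ^ (γ / 2) = ‖x‖ ^ γ := by
    intro γ x
    rw [← Real.rpow_natCast ‖x‖ 2, ← Real.rpow_mul (norm_nonneg x)]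
    push_cast
    rw [show (2 : ℝ) * (γ / 2) = γ by ring]
  -- radial derivative of the weight on the support
  have hDwx : ∀ (γ : ℝ) (x : EuclideanSpace ℝ (Fin m)), x ∈ tsupport f →
      fderiv ℝ (w γ) x x = γ * ‖x‖ ^ γ := by
    intro γ x hx
    have hxε : ε ≤ ‖x‖ := hKnorm x hx
    have hx0 : x ≠ 0 := by
      intro h; rw [h, norm_zero] at hxε; linarith
    have ha : (0 : ℝ) < ‖x‖ ^ 2 := pow_pos (norm_pos_iff.mpr hx0) 2
    rw [hw_fderiv γ x hx]
    simp only [ContinuousLinearMap.coe_smul', Pi.smul_apply, smul_eq_mul,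
      innerSL_apply_apply]
    rw [real_inner_self_eq_norm_sq]
    rw [Real.rpow_sub_one (ne_of_gt ha), hsq_rpow γ x]
    field_simp
    simp only [nsmul_eq_mul, Nat.cast_ofNat]
    ring
  -- pointwise divergence identity on the support
  have hdiv : ∀ x ∈ tsupport f, ∑ i, fderiv ℝ (F i) x (e i) = c * ‖x‖ ^ β := by
    intro x hx
    have hFi : ∀ i : Fin m, fderiv ℝ (F i) x (e i)
        = w β x + x i * (fderiv ℝ (w β) x (e i)) := by
      intro i
      have : fderiv ℝ (F i) x
          = w β x • fderiv ℝ (fun y : EuclideanSpace ℝ (Fin m) => y i) x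
            + x i • fderiv ℝ (w β) x :=
        fderiv_fun_mul ((hw_diff β) x) (hproj_diff i x)
      rw [this]
      simp only [ContinuousLinearMap.add_apply, ContinuousLinearMap.coe_smul',
        Pi.smul_apply, smul_eq_mul, hproj_fderiv i x]
      have : (EuclideanSpace.proj (𝕜 := ℝ) i) (e i) = 1 := by
        simp [he_def, EuclideanSpace.single_apply]
      rw [this, mul_one]
    have hDsum : fderiv ℝ (w β) x x = ∑ i, x i * fderiv ℝ (w β) x (e i) := by
      calc fderiv ℝ (w β) x x = fderiv ℝ (w β) x (∑ i, x i • e i) := by rw [hsum_repr x]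
        _ = ∑ i, x i * fderiv ℝ (w β) x (e i) := by rw [map_sum]; simp [smul_eq_mul]
    calc ∑ i, fderiv ℝ (F i) x (e i)
        = ∑ i : Fin m, (w β x + x i * (fderiv ℝ (w β) x (e i))) :=
          Finset.sum_congr rfl fun i _ => hFi i
      _ = (m : ℝ) * w β x + fderiv ℝ (w β) x x := by
          rw [Finset.sum_add_distrib, Finset.sum_const, hDsum]
          simp [mul_comm]
      _ = c * ‖x‖ ^ β := by
          rw [hDwx β x hx, hw_supp β x hx, hc_def, hβ_def]
          ring
  -- named integrability facts
  have hint1 : ∀ i : Fin m, Integrable (fun x => F i x * fderiv ℝ G x (e i)) := by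
    intro i
    apply hint _ ((hFc i).mul (hGfd_cont (e i)))
    intro x hx
    have : fderiv ℝ G x = 0 := by rw [hGfd x, hf0 x hx]; simp
    simp [this]
  have hint2 : ∀ i : Fin m, Integrable (fun x => fderiv ℝ (F i) x (e i) * G x) := by
    intro i
    apply hint _ ((hFfd_cont i (e i)).mul hGd.continuous)
    intro x hx
    simp [hG0 x hx]
  have hintA : Integrable (fun x => w β x * G x) := by
    apply hint _ ((hw_cont β).mul hGd.continuous)
    intro x hx
    simp [hG0 x hx]
  have hintB : Integrable (fun x => w α x * ‖fderiv ℝ f x‖ ^ 2) := by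
    apply hint _ ((hw_cont α).mul (hfc.norm.pow 2))
    intro x hx
    simp [hfd0 x hx]
  have hintΦ : Integrable (fun x => w β x * ((2 * f x) * fderiv ℝ f x x)) := by
    apply hint _ ((hw_cont β).mul ((continuous_const.mul hf.continuous).mul
      (hfc.clm_apply continuous_id)))
    intro x hx
    simp [hf0 x hx]
  -- the integrated identity
  set A : ℝ := ∫ x, w β x * G x with hA_def
  set B : ℝ := ∫ x, w α x * ‖fderiv ℝ f x‖ ^ 2 with hB_def
  have key : ∫ x, w β x * ((2 * f x) * fderiv ℝ f x x) = - (c * A) := by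
    have hL : ∫ x, w β x * ((2 * f x) * fderiv ℝ f x x)
        = ∑ i, ∫ x, F i x * fderiv ℝ G x (e i) := by
      rw [← integral_finset_sum _ (fun i _ => hint1 i)]
      refine integral_congr_ae (Filter.Eventually.of_forall fun x => ?_)
      have hDsum : fderiv ℝ f x x = ∑ i, x i * fderiv ℝ f x (e i) := by
        calc fderiv ℝ f x x = fderiv ℝ f x (∑ i, x i • e i) := by rw [hsum_repr x]
          _ = ∑ i, x i * fderiv ℝ f x (e i) := by rw [map_sum]; simp [smul_eq_mul]
      simp only [hF_def, hGfd, ContinuousLinearMap.coe_smul', Pi.smul_apply, smul_eq_mul]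
      rw [hDsum]
      simp only [Finset.mul_sum]
      exact Finset.sum_congr rfl fun i _ => by ring
    have hR : ∑ i, ∫ x, fderiv ℝ (F i) x (e i) * G x = c * A := by
      rw [← integral_finset_sum _ (fun i _ => hint2 i), hA_def, ← integral_const_mul]
      refine integral_congr_ae (Filter.Eventually.of_forall fun x => ?_)
      show (∑ i, fderiv ℝ (F i) x (e i) * G x) = c * (w β x * G x)
      rw [← Finset.sum_mul]
      by_cases hx : x ∈ tsupport f
      · rw [hdiv x hx, hw_supp β x hx]; ring
      · simp [hG0 x hx]
    rw [hL]
    rw [Finset.sum_congr rfl fun i _ => IBP i, Finset.sum_neg_distrib, hR]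
  -- nonnegativity of A
  have hA0 : 0 ≤ A := by
    rw [hA_def]
    apply integral_nonneg
    intro x
    exact mul_nonneg (hw_nonneg β x) (mul_self_nonneg (f x))
  -- rewrite the goal integrals
  have hgrad_norm : ∀ x, ‖gradient f x‖ = ‖fderiv ℝ f x‖ := by
    intro x
    rw [gradient]
    exact LinearIsometryEquiv.norm_map _ _
  have hgoalL : ∫ x : EuclideanSpace ℝ (Fin m), ‖x‖ ^ (α - 2) * (f x) ^ 2 = A := by
    rw [hA_def]
    refine integral_congr_ae (Filter.Eventually.of_forall fun x => ?_)
    show ‖x‖ ^ (α - 2) * (f x) ^ 2 = w β x * G x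
    by_cases hx : x ∈ tsupport f
    · rw [hw_supp β x hx, hβ_def, hG_def, sq]
    · simp [hf0 x hx, hG_def]
  have hgoalR : ∫ x : EuclideanSpace ℝ (Fin m), ‖x‖ ^ α * ‖gradient f x‖ ^ 2 = B := by
    rw [hB_def]
    refine integral_congr_ae (Filter.Eventually.of_forall fun x => ?_)
    show ‖x‖ ^ α * ‖gradient f x‖ ^ 2 = w α x * ‖fderiv ℝ f x‖ ^ 2
    rw [hgrad_norm x]
    by_cases hx : x ∈ tsupport f
    · rw [hw_supp α x hx]
    · simp [hfd0 x hx]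
  -- the pointwise AM-GM bound
  set t : ℝ := |c| / 2 with ht_def
  have ht : 0 < t := by rw [ht_def]; positivity
  have hptw : ∀ x, |w β x * ((2 * f x) * fderiv ℝ f x x)|
      ≤ t * (w β x * G x) + (1 / t) * (w α x * ‖fderiv ℝ f x‖ ^ 2) := by
    intro x
    by_cases hx : x ∈ tsupport f
    · have hxε : ε ≤ ‖x‖ := hKnorm x hx
      have hd : (0 : ℝ) < ‖x‖ := lt_of_lt_of_le hε hxε
      rw [hw_supp β x hx, hw_supp α x hx]
      show |‖x‖ ^ β * (2 * f x * fderiv ℝ f x x)| ≤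
        t * (‖x‖ ^ β * (f x * f x)) + 1 / t * (‖x‖ ^ α * ‖fderiv ℝ f x‖ ^ 2)
      have hp : (0 : ℝ) ≤ ‖x‖ ^ β := Real.rpow_nonneg hd.le β
      have hq0 : (0 : ℝ) ≤ |f x| := abs_nonneg _
      have hr0 : (0 : ℝ) ≤ ‖fderiv ℝ f x‖ := norm_nonneg _
      have hDf : |fderiv ℝ f x x| ≤ ‖fderiv ℝ f x‖ * ‖x‖ := by
        have := (fderiv ℝ f x).le_opNorm x
        rwa [Real.norm_eq_abs] at this
      have hda : ‖x‖ ^ α = ‖x‖ ^ β * ‖x‖ ^ 2 := by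
        rw [show α = β + 2 by rw [hβ_def]; ring, Real.rpow_add hd, Real.rpow_two]
      have hfxq : f x * f x = |f x| ^ 2 := by rw [sq, abs_mul_abs_self]
      have habs : |‖x‖ ^ β * (2 * f x * fderiv ℝ f x x)|
          ≤ ‖x‖ ^ β * (2 * |f x| * (‖fderiv ℝ f x‖ * ‖x‖)) := by
        rw [abs_mul, abs_of_nonneg hp, abs_mul, abs_mul]
        rw [show |(2 : ℝ)| = 2 by norm_num]
        apply mul_le_mul_of_nonneg_left _ hp
        apply mul_le_mul_of_nonneg_left hDf (by positivity)
      refine le_trans habs ?_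
      rw [hfxq, hda]
      have := hardy_amgm t (‖x‖ ^ β) (|f x|) ‖x‖ ‖fderiv ℝ f x‖ ht hp
      calc ‖x‖ ^ β * (2 * |f x| * (‖fderiv ℝ f x‖ * ‖x‖))
          ≤ t * (‖x‖ ^ β * |f x| ^ 2) + 1 / t * (‖x‖ ^ β * ‖x‖ ^ 2 * ‖fderiv ℝ f x‖ ^ 2) := this
        _ = t * (‖x‖ ^ β * |f x| ^ 2) + 1 / t * (‖x‖ ^ β * ‖x‖ ^ 2 * ‖fderiv ℝ f x‖ ^ 2) := rfl
    · simp [hG0 x hx, hf0 x hx, hfd0 x hx]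
  -- put the integrals together
  have hchain : |c| * A ≤ t * A + (1 / t) * B := by
    have h1 : |c| * A = |∫ x, w β x * ((2 * f x) * fderiv ℝ f x x)| := by
      rw [key, abs_neg, abs_mul, abs_of_nonneg hA0]
    have h2 : |∫ x, w β x * ((2 * f x) * fderiv ℝ f x x)|
        ≤ ∫ x, |w β x * ((2 * f x) * fderiv ℝ f x x)| := by
      have h2' := norm_integral_le_integral_norm
        (f := fun x => w β x * ((2 * f x) * fderiv ℝ f x x)) (μ := volume)
      simp only [Real.norm_eq_abs] at h2'
      exact h2'
    have h3 : ∫ x, |w β x * ((2 * f x) * fderiv ℝ f x x)|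
        ≤ ∫ x, (t * (w β x * G x) + (1 / t) * (w α x * ‖fderiv ℝ f x‖ ^ 2)) := by
      apply integral_mono hintΦ.abs _ hptw
      exact (hintA.const_mul t).add (hintB.const_mul (1 / t))
    have h4 : ∫ x, (t * (w β x * G x) + (1 / t) * (w α x * ‖fderiv ℝ f x‖ ^ 2))
        = t * A + (1 / t) * B := by
      rw [integral_add (hintA.const_mul t) (hintB.const_mul (1 / t)),
        integral_const_mul, integral_const_mul, hA_def, hB_def]
    rw [h1]
    exact le_trans h2 (le_trans h3 (le_of_eq h4))
  -- conclude
  rw [hgoalL, hgoalR]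
  have h5 : (|c| / 2) * A ≤ (2 / |c|) * B := by
    have e1 : 1 / t = 2 / |c| := by rw [ht_def, one_div_div]
    rw [e1, ht_def] at hchain
    linarith
  have h6 : A ≤ (2 / |c|) ^ 2 * B := by
    have hpos : (0 : ℝ) < 2 / |c| := by positivity
    have hmul := mul_le_mul_of_nonneg_left h5 hpos.le
    have hAA : (2 / |c|) * ((|c| / 2) * A) = A := by field_simp
    rw [hAA] at hmul
    calc A ≤ (2 / |c|) * ((2 / |c|) * B) := hmul
      _ = (2 / |c|) ^ 2 * B := by ring
  calc A ≤ (2 / |c|) ^ 2 * B := h6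
    _ = (2 / c) ^ 2 * B := by rw [div_pow, div_pow, sq_abs]
end

section
/- Let m ≥ 1 and α ∈ ℝ with 2m + α ≠ 2. Then for every f ∈ C_c^∞(ℝ^{2m+1} \ {(x,y,z) : |x|²+|y|² = 0}) the horizontal Hardy inequality on the Heisenberg group ∫ r^{α−2}·f² dξ ≤ (2/(2m+α−2))²·∫ r^α·|∇_ℍ f|² dξ holds, where r(x,y,z) = (|x|²+|y|²)^{1/2}. -/
open Real MeasureTheory

/-- The Heisenberg group `ℍ^m`, identified with `ℝ^m × ℝ^m × ℝ` with coordinates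
`ξ = (x, y, z)` and Lebesgue measure. -/
abbrev Heis (m : ℕ) := EuclideanSpace ℝ (Fin m) × EuclideanSpace ℝ (Fin m) × ℝ

/-- The horizontal vector field `X_i = ∂_{x_i} + 2 y_i ∂_z` on the Heisenberg group. -/
noncomputable def Xd {m : ℕ} (i : Fin m) (f : Heis m → ℝ) (ξ : Heis m) : ℝ :=
  fderiv ℝ f ξ (EuclideanSpace.single i 1, 0, 0) + 2 * ξ.2.1 i * fderiv ℝ f ξ (0, 0, 1)

/-- The horizontal vector field `Y_i = ∂_{y_i} - 2 x_i ∂_z` on the Heisenberg group. -/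
noncomputable def Yd {m : ℕ} (i : Fin m) (f : Heis m → ℝ) (ξ : Heis m) : ℝ :=
  fderiv ℝ f ξ (0, EuclideanSpace.single i 1, 0) - 2 * ξ.1 i * fderiv ℝ f ξ (0, 0, 1)

/-- The squared length `|∇_ℍ f|²` of the horizontal gradient on the Heisenberg group. -/
noncomputable def hgradSq {m : ℕ} (f : Heis m → ℝ) (ξ : Heis m) : ℝ :=
  ∑ i : Fin m, ((Xd i f ξ) ^ 2 + (Yd i f ξ) ^ 2)

/-! ### Auxiliary definitions -/

instance heisHaar (m : ℕ) : Measure.IsAddHaarMeasure (volume : Measure (Heis m)) := by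
  have : (volume : Measure (Heis m)) =
      (volume : Measure (EuclideanSpace ℝ (Fin m))).prod
        ((volume : Measure (EuclideanSpace ℝ (Fin m))).prod (volume : Measure ℝ)) := rfl
  rw [this]
  exact Measure.prod.instIsAddHaarMeasure _ _

noncomputable def px (m : ℕ) (i : Fin m) : Heis m →L[ℝ] ℝ :=
  (EuclideanSpace.proj i).comp (ContinuousLinearMap.fst ℝ _ _)

noncomputable def py (m : ℕ) (i : Fin m) : Heis m →L[ℝ] ℝ :=
  ((EuclideanSpace.proj i).comp (ContinuousLinearMap.fst ℝ _ _)).comp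
    (ContinuousLinearMap.snd ℝ (EuclideanSpace ℝ (Fin m)) (EuclideanSpace ℝ (Fin m) × ℝ))

lemma px_apply {m : ℕ} (i : Fin m) (ξ : Heis m) : px m i ξ = ξ.1 i := rfl
lemma py_apply {m : ℕ} (i : Fin m) (ξ : Heis m) : py m i ξ = ξ.2.1 i := rfl

noncomputable def vX (m : ℕ) (i : Fin m) : Heis m := (EuclideanSpace.single i 1, 0, 0)
noncomputable def vY (m : ℕ) (i : Fin m) : Heis m := (0, EuclideanSpace.single i 1, 0)

noncomputable def sH {m : ℕ} (ξ : Heis m) : ℝ := ∑ i, ((ξ.1 i) ^ 2 + (ξ.2.1 i) ^ 2)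

noncomputable def sL {m : ℕ} (ξ : Heis m) : Heis m →L[ℝ] ℝ :=
  ∑ i, ((2 * ξ.1 i) • px m i + (2 * ξ.2.1 i) • py m i)

lemma sH_nonneg {m : ℕ} (ξ : Heis m) : 0 ≤ sH ξ :=
  Finset.sum_nonneg fun i _ => by positivity

lemma sH_eq {m : ℕ} (ξ : Heis m) : ‖ξ.1‖ ^ 2 + ‖ξ.2.1‖ ^ 2 = sH ξ := by
  rw [EuclideanSpace.norm_eq, EuclideanSpace.norm_eq, Real.sq_sqrt (by positivity),
    Real.sq_sqrt (by positivity), sH, ← Finset.sum_add_distrib]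
  simp [sq_abs]

lemma contDiff_sH {m : ℕ} : ContDiff ℝ (⊤ : ℕ∞) (sH (m := m)) := by
  apply ContDiff.sum
  intro i _
  exact (((px m i).contDiff).pow 2).add (((py m i).contDiff).pow 2)

lemma hasFDerivAt_sH {m : ℕ} (ξ : Heis m) : HasFDerivAt sH (sL ξ) ξ := by
  have h : ∀ i : Fin m, HasFDerivAt (fun ξ : Heis m => (ξ.1 i) ^ 2 + (ξ.2.1 i) ^ 2)
      ((2 * ξ.1 i) • px m i + (2 * ξ.2.1 i) • py m i) ξ := by
    intro i
    have h1 : HasFDerivAt (fun ξ : Heis m => ξ.1 i) (px m i) ξ := (px m i).hasFDerivAt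
    have h2 : HasFDerivAt (fun ξ : Heis m => ξ.2.1 i) (py m i) ξ := (py m i).hasFDerivAt
    have h3 := (h1.mul h1).add (h2.mul h2)
    have e : (fun ξ : Heis m => (ξ.1 i) ^ 2 + (ξ.2.1 i) ^ 2)
        = fun ξ : Heis m => ξ.1 i * ξ.1 i + ξ.2.1 i * ξ.2.1 i := by
      funext ξ; ring
    rw [e]
    refine h3.congr_fderiv ?_
    refine ContinuousLinearMap.ext fun v => ?_
    simp only [ContinuousLinearMap.add_apply, ContinuousLinearMap.smul_apply, smul_eq_mul]
    ring
  exact HasFDerivAt.fun_sum (fun i _ => h i)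

lemma sL_vX {m : ℕ} (ξ : Heis m) (i : Fin m) : sL ξ (vX m i) = 2 * ξ.1 i := by
  simp only [sL, ContinuousLinearMap.sum_apply, ContinuousLinearMap.add_apply,
    ContinuousLinearMap.smul_apply, px_apply, py_apply, vX, smul_eq_mul]
  simp [EuclideanSpace.single_apply, Finset.sum_ite_eq', mul_ite]

lemma sL_vY {m : ℕ} (ξ : Heis m) (i : Fin m) : sL ξ (vY m i) = 2 * ξ.2.1 i := by
  simp only [sL, ContinuousLinearMap.sum_apply, ContinuousLinearMap.add_apply,
    ContinuousLinearMap.smul_apply, px_apply, py_apply, vY, smul_eq_mul]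
  simp [EuclideanSpace.single_apply, Finset.sum_ite_eq', mul_ite]

noncomputable def Wf {m : ℕ} (α : ℝ) (f : Heis m → ℝ) (ξ : Heis m) : ℝ :=
  sH ξ ^ ((α - 2) / 2) * f ξ ^ 2

noncomputable def gXf {m : ℕ} (α : ℝ) (f : Heis m → ℝ) (i : Fin m) (ξ : Heis m) : ℝ :=
  sH ξ ^ ((α - 2) / 2) * f ξ ^ 2 * ξ.1 i

noncomputable def gYf {m : ℕ} (α : ℝ) (f : Heis m → ℝ) (i : Fin m) (ξ : Heis m) : ℝ :=
  sH ξ ^ ((α - 2) / 2) * f ξ ^ 2 * ξ.2.1 i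

noncomputable def DD {m : ℕ} (f : Heis m → ℝ) (ξ : Heis m) : ℝ :=
  ∑ i, (ξ.1 i * fderiv ℝ f ξ (vX m i) + ξ.2.1 i * fderiv ℝ f ξ (vY m i))

noncomputable def Pf {m : ℕ} (α : ℝ) (f : Heis m → ℝ) (ξ : Heis m) : ℝ :=
  2 * sH ξ ^ ((α - 2) / 2) * f ξ * DD f ξ

noncomputable def Qf {m : ℕ} (α : ℝ) (f : Heis m → ℝ) (ξ : Heis m) : ℝ :=
  sH ξ ^ (α / 2) * hgradSq f ξ

/-! ### Derivative computations -/

lemma gX_fderiv {m : ℕ} {α : ℝ} {f : Heis m → ℝ} (hf : ContDiff ℝ (⊤ : ℕ∞) f) (i : Fin m)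
    {ξ : Heis m} (hξ : 0 < sH ξ) :
    fderiv ℝ (gXf α f i) ξ (vX m i)
      = Wf α f ξ + ξ.1 i * (sH ξ ^ ((α - 2) / 2) * (2 * f ξ * fderiv ℝ f ξ (vX m i))
          + f ξ ^ 2 * (((α - 2) / 2) * sH ξ ^ ((α - 2) / 2 - 1) * (2 * ξ.1 i))) := by
  have hfd := (hf.differentiable (by simp) ξ).hasFDerivAt
  have h1 : HasFDerivAt (fun ξ : Heis m => sH ξ ^ ((α - 2) / 2))
      ((((α - 2) / 2) * sH ξ ^ ((α - 2) / 2 - 1)) • sL ξ) ξ :=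
    (hasFDerivAt_sH ξ).rpow_const (Or.inl hξ.ne')
  have h2 : HasFDerivAt (fun ξ : Heis m => f ξ ^ 2) ((2 * f ξ) • fderiv ℝ f ξ) ξ := by
    have e : (fun ξ : Heis m => f ξ ^ 2) = fun ξ : Heis m => f ξ * f ξ := by
      funext ξ; ring
    rw [e]
    refine (hfd.mul hfd).congr_fderiv ?_
    refine ContinuousLinearMap.ext fun v => ?_
    simp only [ContinuousLinearMap.add_apply, ContinuousLinearMap.smul_apply, smul_eq_mul]
    ring
  have h3 : HasFDerivAt (fun ξ : Heis m => ξ.1 i) (px m i) ξ := (px m i).hasFDerivAt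
  have h4 := (h1.mul h2).mul h3
  have h5 : HasFDerivAt (gXf α f i)
      ((sH ξ ^ ((α - 2) / 2) * f ξ ^ 2) • px m i +
        ξ.1 i • (sH ξ ^ ((α - 2) / 2) • ((2 * f ξ) • fderiv ℝ f ξ) +
          f ξ ^ 2 • ((((α - 2) / 2) * sH ξ ^ ((α - 2) / 2 - 1)) • sL ξ))) ξ := h4
  rw [h5.fderiv]
  simp only [ContinuousLinearMap.add_apply, ContinuousLinearMap.smul_apply, smul_eq_mul,
    px_apply, sL_vX, Wf]
  have : px m i (vX m i) = 1 := by
    simp [px_apply, vX, EuclideanSpace.single_apply]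
  rw [show (vX m i).1 i = (1:ℝ) by simpa [px_apply] using this]
  ring

lemma gY_fderiv {m : ℕ} {α : ℝ} {f : Heis m → ℝ} (hf : ContDiff ℝ (⊤ : ℕ∞) f) (i : Fin m)
    {ξ : Heis m} (hξ : 0 < sH ξ) :
    fderiv ℝ (gYf α f i) ξ (vY m i)
      = Wf α f ξ + ξ.2.1 i * (sH ξ ^ ((α - 2) / 2) * (2 * f ξ * fderiv ℝ f ξ (vY m i))
          + f ξ ^ 2 * (((α - 2) / 2) * sH ξ ^ ((α - 2) / 2 - 1) * (2 * ξ.2.1 i))) := by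
  have hfd := (hf.differentiable (by simp) ξ).hasFDerivAt
  have h1 : HasFDerivAt (fun ξ : Heis m => sH ξ ^ ((α - 2) / 2))
      ((((α - 2) / 2) * sH ξ ^ ((α - 2) / 2 - 1)) • sL ξ) ξ :=
    (hasFDerivAt_sH ξ).rpow_const (Or.inl hξ.ne')
  have h2 : HasFDerivAt (fun ξ : Heis m => f ξ ^ 2) ((2 * f ξ) • fderiv ℝ f ξ) ξ := by
    have e : (fun ξ : Heis m => f ξ ^ 2) = fun ξ : Heis m => f ξ * f ξ := by
      funext ξ; ring
    rw [e]
    refine (hfd.mul hfd).congr_fderiv ?_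
    refine ContinuousLinearMap.ext fun v => ?_
    simp only [ContinuousLinearMap.add_apply, ContinuousLinearMap.smul_apply, smul_eq_mul]
    ring
  have h3 : HasFDerivAt (fun ξ : Heis m => ξ.2.1 i) (py m i) ξ := (py m i).hasFDerivAt
  have h4 := (h1.mul h2).mul h3
  have h5 : HasFDerivAt (gYf α f i)
      ((sH ξ ^ ((α - 2) / 2) * f ξ ^ 2) • py m i +
        ξ.2.1 i • (sH ξ ^ ((α - 2) / 2) • ((2 * f ξ) • fderiv ℝ f ξ) +
          f ξ ^ 2 • ((((α - 2) / 2) * sH ξ ^ ((α - 2) / 2 - 1)) • sL ξ))) ξ := h4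
  rw [h5.fderiv]
  simp only [ContinuousLinearMap.add_apply, ContinuousLinearMap.smul_apply, smul_eq_mul,
    py_apply, sL_vY, Wf]
  have : py m i (vY m i) = 1 := by
    simp [py_apply, vY, EuclideanSpace.single_apply]
  rw [show (vY m i).2.1 i = (1:ℝ) by simpa [py_apply] using this]
  ring

lemma div_id {m : ℕ} {α : ℝ} {f : Heis m → ℝ} (hf : ContDiff ℝ (⊤ : ℕ∞) f)
    {ξ : Heis m} (hξ : 0 < sH ξ) :
    ∑ i, (fderiv ℝ (gXf α f i) ξ (vX m i) + fderiv ℝ (gYf α f i) ξ (vY m i))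
      = (2 * m + α - 2) * Wf α f ξ + Pf α f ξ := by
  have hs : sH ξ ^ ((α - 2) / 2 - 1) * sH ξ = sH ξ ^ ((α - 2) / 2) := by
    rw [← Real.rpow_add_one hξ.ne' ((α - 2) / 2 - 1)]
    norm_num
  have step1 : ∑ i, (fderiv ℝ (gXf α f i) ξ (vX m i) + fderiv ℝ (gYf α f i) ξ (vY m i))
      = ∑ i, (2 * Wf α f ξ
          + (2 * sH ξ ^ ((α - 2) / 2) * f ξ) *
              (ξ.1 i * fderiv ℝ f ξ (vX m i) + ξ.2.1 i * fderiv ℝ f ξ (vY m i))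
          + (2 * ((α - 2) / 2) * (sH ξ ^ ((α - 2) / 2 - 1) * f ξ ^ 2)) *
              ((ξ.1 i) ^ 2 + (ξ.2.1 i) ^ 2)) := by
    refine Finset.sum_congr rfl fun i _ => ?_
    rw [gX_fderiv hf i hξ, gY_fderiv hf i hξ, Wf]
    ring
  rw [step1, Finset.sum_add_distrib, Finset.sum_add_distrib, ← Finset.mul_sum, ← Finset.mul_sum,
    Finset.sum_const, Finset.card_univ, Fintype.card_fin, nsmul_eq_mul]
  rw [show (∑ i, (ξ.1 i * fderiv ℝ f ξ (vX m i) + ξ.2.1 i * fderiv ℝ f ξ (vY m i))) = DD f ξ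
    from rfl]
  rw [← Finset.mul_sum]
  rw [show (∑ i, ((ξ.1 i) ^ 2 + (ξ.2.1 i) ^ 2)) = sH ξ from rfl]
  rw [Pf, Wf]
  linear_combination (2 * ((α - 2) / 2) * f ξ ^ 2) * hs

/-! ### Integration by parts -/

lemma integrable_fderiv_apply {m : ℕ} {g : Heis m → ℝ} (hg : ContDiff ℝ 1 g)
    (hc : HasCompactSupport g) (v : Heis m) :
    Integrable (fun ξ => fderiv ℝ g ξ v) (volume : Measure (Heis m)) := by
  apply Continuous.integrable_of_hasCompactSupport
  · exact (hg.continuous_fderiv one_ne_zero).clm_apply continuous_const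
  · exact hc.fderiv_apply ℝ v

lemma integral_fderiv_apply_eq_zero_s11 {m : ℕ} {g : Heis m → ℝ} (hg : ContDiff ℝ 1 g)
    (hc : HasCompactSupport g) (v : Heis m) :
    ∫ ξ : Heis m, fderiv ℝ g ξ v = 0 := by
  have hdiff : Differentiable ℝ g := hg.differentiable one_ne_zero
  have hint : Integrable (fun ξ => fderiv ℝ g ξ v) (volume : Measure (Heis m)) :=
    integrable_fderiv_apply hg hc v
  have h := integral_mul_fderiv_eq_neg_fderiv_mul_of_integrable
    (μ := (volume : Measure (Heis m))) (f := g) (g := fun _ => (1:ℝ)) (v := v)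
    (by simpa using hint)
    (by simp [fderiv_const])
    (by simpa using hg.continuous.integrable_of_hasCompactSupport hc)
    (fun x _ => hdiff x) (fun x _ => differentiableAt_const 1)
  simp only [fderiv_const, fderiv_fun_const, Pi.zero_apply, ContinuousLinearMap.zero_apply, mul_zero, mul_one,
    integral_zero] at h
  linarith [h]

/-! ### Cauchy–Schwarz -/

lemma DD_sq_le {m : ℕ} (f : Heis m → ℝ) (ξ : Heis m) :
    (DD f ξ) ^ 2 ≤ sH ξ * hgradSq f ξ := by
  have hD : DD f ξ = ∑ i : Fin m, (ξ.1 i * Xd i f ξ + ξ.2.1 i * Yd i f ξ) := by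
    refine Finset.sum_congr rfl fun i _ => ?_
    simp only [Xd, Yd, vX, vY]
    ring
  have h2 := Finset.sum_mul_sq_le_sq_mul_sq (Finset.univ : Finset (Fin m ⊕ Fin m))
    (Sum.elim (fun i => ξ.1 i) (fun i => ξ.2.1 i))
    (Sum.elim (fun i => Xd i f ξ) (fun i => Yd i f ξ))
  rw [Fintype.sum_sum_type, Fintype.sum_sum_type, Fintype.sum_sum_type] at h2
  simp only [Sum.elim_inl, Sum.elim_inr] at h2
  calc (DD f ξ) ^ 2
      = (∑ i : Fin m, ξ.1 i * Xd i f ξ + ∑ i : Fin m, ξ.2.1 i * Yd i f ξ) ^ 2 := by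
        rw [hD, Finset.sum_add_distrib]
    _ ≤ (∑ i : Fin m, (ξ.1 i) ^ 2 + ∑ i : Fin m, (ξ.2.1 i) ^ 2) *
          (∑ i : Fin m, (Xd i f ξ) ^ 2 + ∑ i : Fin m, (Yd i f ξ) ^ 2) := h2
    _ = sH ξ * hgradSq f ξ := by
        rw [sH, hgradSq, Finset.sum_add_distrib, Finset.sum_add_distrib]

theorem horizontal_hardy_heisenberg (m : ℕ) (hm : 1 ≤ m)
    (α : ℝ) (hα : 2 * (m : ℝ) + α ≠ 2)
    (f : Heis m → ℝ) (hf : ContDiff ℝ (⊤ : ℕ∞) f) (hsupp : HasCompactSupport f)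
    (h0 : tsupport f ⊆ {ξ : Heis m | ¬ (‖ξ.1‖ ^ 2 + ‖ξ.2.1‖ ^ 2 = 0)}) :
    ∫ ξ : Heis m, Real.sqrt (‖ξ.1‖ ^ 2 + ‖ξ.2.1‖ ^ 2) ^ (α - 2) * (f ξ) ^ 2
      ≤ (2 / (2 * (m : ℝ) + α - 2)) ^ 2
        * ∫ ξ : Heis m, Real.sqrt (‖ξ.1‖ ^ 2 + ‖ξ.2.1‖ ^ 2) ^ α * hgradSq f ξ := by
  set c : ℝ := 2 * (m : ℝ) + α - 2 with hc_def
  have hc0 : c ≠ 0 := by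
    rw [hc_def]; intro h; apply hα; linarith
  set k : ℝ := |c| with hk_def
  have hk : 0 < k := abs_pos.2 hc0
  -- a positive lower bound for sH on the support of f
  obtain ⟨ε, hε0, hf0⟩ : ∃ ε : ℝ, 0 < ε ∧ ∀ ξ : Heis m, sH ξ < ε → f ξ = 0 := by
    rcases (tsupport f).eq_empty_or_nonempty with he | hne
    · exact ⟨1, one_pos, fun ξ _ => image_eq_zero_of_notMem_tsupport (by simp [he])⟩
    · obtain ⟨ξ0, hξ0K, hmin⟩ := hsupp.exists_isMinOn hne contDiff_sH.continuous.continuousOn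
      refine ⟨sH ξ0, ?_, ?_⟩
      · have h' : sH ξ0 ≠ 0 := by
          have := h0 hξ0K
          simp only [Set.mem_setOf_eq] at this
          rw [← sH_eq]; exact this
        exact lt_of_le_of_ne (sH_nonneg ξ0) (Ne.symm h')
      · intro ξ hξ
        by_contra hfξ
        have hmem : ξ ∈ tsupport f := subset_closure (by simpa [Function.mem_support] using hfξ)
        exact absurd ((isMinOn_iff.1 hmin) ξ hmem) (not_le.2 hξ)
  have hcase : ∀ ξ : Heis m, 0 < sH ξ ∨ sH ξ < ε := fun ξ =>
    (sH_nonneg ξ).lt_or_eq.imp id (fun h => by rw [← h]; exact hε0)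
  have hopen : IsOpen {ξ : Heis m | sH ξ < ε} :=
    isOpen_lt contDiff_sH.continuous continuous_const
  have hev : ∀ ξ : Heis m, sH ξ < ε → f =ᶠ[nhds ξ] (fun _ => 0) := fun ξ h =>
    Filter.eventuallyEq_iff_exists_mem.2 ⟨_, hopen.mem_nhds h, fun ξ' h' => hf0 ξ' h'⟩
  have hfd0 : ∀ ξ : Heis m, sH ξ < ε → fderiv ℝ f ξ = 0 := fun ξ h => by
    rw [(hev ξ h).fderiv_eq]; exact fderiv_const_apply 0
  -- compact support helper
  have hsub : ∀ {F : Heis m → ℝ},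
      (∀ ξ, f ξ = 0 → fderiv ℝ f ξ = 0 → F ξ = 0) → HasCompactSupport F := by
    intro F hF
    refine hsupp.mono' ?_
    intro ξ hξ
    by_contra hns
    have hfz : f ξ = 0 := image_eq_zero_of_notMem_tsupport hns
    have hdz : fderiv ℝ f ξ = 0 := by
      by_contra hne
      exact hns (support_fderiv_subset ℝ (by simpa [Function.mem_support] using hne))
    exact hξ (hF ξ hfz hdz)
  -- continuity helper
  have hcont : ∀ {F : Heis m → ℝ}, (∀ ξ, 0 < sH ξ → ContinuousAt F ξ) →
      (∀ ξ, sH ξ < ε → F ξ = 0) → Continuous F := by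
    intro F h1 h2
    rw [continuous_iff_continuousAt]
    intro ξ
    rcases hcase ξ with h | h
    · exact h1 ξ h
    · exact Filter.EventuallyEq.continuousAt
        (Filter.eventuallyEq_iff_exists_mem.2 ⟨_, hopen.mem_nhds h, fun ξ' h' => h2 ξ' h'⟩)
  -- continuity of basic pieces
  have hDFcont : Continuous (fun ξ : Heis m => fderiv ℝ f ξ) := hf.continuous_fderiv (by simp)
  have hDDcont : Continuous (DD f) := by
    apply continuous_finset_sum
    intro i _
    exact ((px m i).continuous.mul (hDFcont.clm_apply continuous_const)).add
      ((py m i).continuous.mul (hDFcont.clm_apply continuous_const))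
  have hHcont : Continuous (hgradSq f) := by
    apply continuous_finset_sum
    intro i _
    have hz : Continuous (fun ξ : Heis m => fderiv ℝ f ξ (0, 0, 1)) :=
      hDFcont.clm_apply continuous_const
    have hXd : Continuous (Xd i f) :=
      (hDFcont.clm_apply continuous_const).add
        ((continuous_const.mul (py m i).continuous).mul hz)
    have hYd : Continuous (Yd i f) :=
      (hDFcont.clm_apply continuous_const).sub
        ((continuous_const.mul (px m i).continuous).mul hz)
    exact (hXd.pow 2).add (hYd.pow 2)
  have hrcont : ∀ (γ : ℝ) (ξ : Heis m), 0 < sH ξ →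
      ContinuousAt (fun ξ : Heis m => sH ξ ^ γ) ξ := fun γ ξ h =>
    contDiff_sH.continuous.continuousAt.rpow_const (Or.inl h.ne')
  have hWcont : Continuous (Wf α f) :=
    hcont (fun ξ h => (hrcont _ ξ h).mul ((hf.continuous.pow 2).continuousAt))
      (fun ξ h => by simp [Wf, hf0 ξ h])
  have hPcont : Continuous (Pf α f) :=
    hcont (fun ξ h => ((continuousAt_const.mul (hrcont _ ξ h)).mul
        hf.continuous.continuousAt).mul hDDcont.continuousAt)
      (fun ξ h => by simp [Pf, hf0 ξ h])
  have hQcont : Continuous (Qf α f) :=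
    hcont (fun ξ h => (hrcont _ ξ h).mul hHcont.continuousAt)
      (fun ξ h => by simp [Qf, hgradSq, Xd, Yd, hfd0 ξ h])
  -- compact supports
  have hWsupp : HasCompactSupport (Wf α f) := hsub (fun ξ h1 _ => by simp [Wf, h1])
  have hPsupp : HasCompactSupport (Pf α f) := hsub (fun ξ h1 _ => by simp [Pf, h1])
  have hQsupp : HasCompactSupport (Qf α f) :=
    hsub (fun ξ _ h2 => by simp [Qf, hgradSq, Xd, Yd, h2])
  have hgXsupp : ∀ i, HasCompactSupport (gXf α f i) :=
    fun i => hsub (fun ξ h1 _ => by simp [gXf, h1])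
  have hgYsupp : ∀ i, HasCompactSupport (gYf α f i) :=
    fun i => hsub (fun ξ h1 _ => by simp [gYf, h1])
  -- smoothness of gX, gY
  have hgXc : ∀ i, ContDiff ℝ 1 (gXf α f i) := by
    intro i
    rw [contDiff_iff_contDiffAt]
    intro ξ
    rcases hcase ξ with h | h
    · have h1 : ContDiffAt ℝ 1 (fun ξ : Heis m => sH ξ ^ ((α - 2) / 2)) ξ :=
        (contDiff_sH.contDiffAt.of_le (by simp)).rpow_const_of_ne h.ne'
      exact (h1.mul ((hf.contDiffAt.of_le (by simp)).pow 2)).mul (px m i).contDiff.contDiffAt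
    · refine contDiffAt_const (c := 0) |>.congr_of_eventuallyEq ?_
      exact Filter.eventuallyEq_iff_exists_mem.2
        ⟨_, hopen.mem_nhds h, fun ξ' h' => by simp [gXf, hf0 ξ' h']⟩
  have hgYc : ∀ i, ContDiff ℝ 1 (gYf α f i) := by
    intro i
    rw [contDiff_iff_contDiffAt]
    intro ξ
    rcases hcase ξ with h | h
    · have h1 : ContDiffAt ℝ 1 (fun ξ : Heis m => sH ξ ^ ((α - 2) / 2)) ξ :=
        (contDiff_sH.contDiffAt.of_le (by simp)).rpow_const_of_ne h.ne'
      exact (h1.mul ((hf.contDiffAt.of_le (by simp)).pow 2)).mul (py m i).contDiff.contDiffAt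
    · refine contDiffAt_const (c := 0) |>.congr_of_eventuallyEq ?_
      exact Filter.eventuallyEq_iff_exists_mem.2
        ⟨_, hopen.mem_nhds h, fun ξ' h' => by simp [gYf, hf0 ξ' h']⟩
  -- integrability
  have hWint : Integrable (Wf α f) (volume : Measure (Heis m)) :=
    hWcont.integrable_of_hasCompactSupport hWsupp
  have hPint : Integrable (Pf α f) (volume : Measure (Heis m)) :=
    hPcont.integrable_of_hasCompactSupport hPsupp
  have hQint : Integrable (Qf α f) (volume : Measure (Heis m)) :=
    hQcont.integrable_of_hasCompactSupport hQsupp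
  -- pointwise divergence identity
  have hdiv : ∀ ξ : Heis m,
      (∑ i, (fderiv ℝ (gXf α f i) ξ (vX m i) + fderiv ℝ (gYf α f i) ξ (vY m i)))
        = c * Wf α f ξ + Pf α f ξ := by
    intro ξ
    rcases hcase ξ with h | h
    · rw [div_id hf h, ← hc_def]
    · have hWz : Wf α f ξ = 0 := by simp [Wf, hf0 ξ h]
      have hPz : Pf α f ξ = 0 := by simp [Pf, hf0 ξ h]
      have hgz : ∀ i, fderiv ℝ (gXf α f i) ξ = 0 ∧ fderiv ℝ (gYf α f i) ξ = 0 := by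
        intro i
        have hevX : gXf α f i =ᶠ[nhds ξ] (fun _ => 0) :=
          Filter.eventuallyEq_iff_exists_mem.2
            ⟨_, hopen.mem_nhds h, fun ξ' h' => by simp [gXf, hf0 ξ' h']⟩
        have hevY : gYf α f i =ᶠ[nhds ξ] (fun _ => 0) :=
          Filter.eventuallyEq_iff_exists_mem.2
            ⟨_, hopen.mem_nhds h, fun ξ' h' => by simp [gYf, hf0 ξ' h']⟩
        exact ⟨by rw [hevX.fderiv_eq]; exact fderiv_const_apply 0,
               by rw [hevY.fderiv_eq]; exact fderiv_const_apply 0⟩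
      rw [hWz, hPz, Finset.sum_eq_zero (fun i _ => by rw [(hgz i).1, (hgz i).2]; simp)]
      ring
  -- the integral identity
  have hzero : (∫ ξ : Heis m, (c * Wf α f ξ + Pf α f ξ)) = 0 := by
    have he : (fun ξ : Heis m => c * Wf α f ξ + Pf α f ξ)
        = fun ξ : Heis m => ∑ i, (fderiv ℝ (gXf α f i) ξ (vX m i)
            + fderiv ℝ (gYf α f i) ξ (vY m i)) := funext fun ξ => (hdiv ξ).symm
    rw [he, integral_finset_sum]
    · refine Finset.sum_eq_zero fun i _ => ?_
      rw [integral_add (integrable_fderiv_apply (hgXc i) (hgXsupp i) _)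
          (integrable_fderiv_apply (hgYc i) (hgYsupp i) _),
        integral_fderiv_apply_eq_zero_s11 (hgXc i) (hgXsupp i) _,
        integral_fderiv_apply_eq_zero_s11 (hgYc i) (hgYsupp i) _, add_zero]
    · intro i _
      exact (integrable_fderiv_apply (hgXc i) (hgXsupp i) _).add
        (integrable_fderiv_apply (hgYc i) (hgYsupp i) _)
  have hkey : c * (∫ ξ : Heis m, Wf α f ξ) = - ∫ ξ : Heis m, Pf α f ξ := by
    rw [integral_add (hWint.const_mul c) hPint, integral_const_mul] at hzero
    linarith
  -- nonnegativity
  have hWnn : ∀ ξ : Heis m, 0 ≤ Wf α f ξ := fun ξ =>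
    mul_nonneg (Real.rpow_nonneg (sH_nonneg ξ) _) (sq_nonneg _)
  have hHnn : ∀ ξ : Heis m, 0 ≤ hgradSq f ξ := fun ξ =>
    Finset.sum_nonneg fun i _ => by positivity
  have hQnn : ∀ ξ : Heis m, 0 ≤ Qf α f ξ := fun ξ =>
    mul_nonneg (Real.rpow_nonneg (sH_nonneg ξ) _) (hHnn ξ)
  -- pointwise bound
  have hbound : ∀ ξ : Heis m, |Pf α f ξ| ≤ k / 2 * Wf α f ξ + 2 / k * Qf α f ξ := by
    intro ξ
    have hs0 := sH_nonneg ξ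
    have hb := DD_sq_le f ξ
    have hH := hHnn ξ
    have hsβ : (0 : ℝ) ≤ sH ξ ^ ((α - 2) / 2) := Real.rpow_nonneg hs0 _
    rcases hs0.lt_or_eq with h | h
    · have hsα : sH ξ ^ (α / 2) = sH ξ ^ ((α - 2) / 2) * sH ξ := by
        rw [show α / 2 = (α - 2) / 2 + 1 by ring, Real.rpow_add_one h.ne']
      have habs : |Pf α f ξ| = sH ξ ^ ((α - 2) / 2) * (2 * |f ξ| * |DD f ξ|) := by
        simp [Pf, abs_mul, abs_of_nonneg hsβ]
        ring
      have hsuff : 2 * |f ξ| * |DD f ξ|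
          ≤ k / 2 * f ξ ^ 2 + 2 / k * (sH ξ * hgradSq f ξ) := by
        have h4 : 4 * k * (|f ξ| * |DD f ξ|)
            ≤ k ^ 2 * f ξ ^ 2 + 4 * (sH ξ * hgradSq f ξ) := by
          nlinarith [sq_nonneg (k * |f ξ| - 2 * |DD f ξ|), hb, sq_abs (f ξ), sq_abs (DD f ξ)]
        have h5 : 2 * |f ξ| * |DD f ξ| = 4 * k * (|f ξ| * |DD f ξ|) / (2 * k) := by
          field_simp
          ring
        rw [h5]
        calc 4 * k * (|f ξ| * |DD f ξ|) / (2 * k)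
            ≤ (k ^ 2 * f ξ ^ 2 + 4 * (sH ξ * hgradSq f ξ)) / (2 * k) :=
              (div_le_div_iff_of_pos_right (by positivity)).2 h4
          _ = k / 2 * f ξ ^ 2 + 2 / k * (sH ξ * hgradSq f ξ) := by
              field_simp
              ring
      calc |Pf α f ξ| = sH ξ ^ ((α - 2) / 2) * (2 * |f ξ| * |DD f ξ|) := habs
        _ ≤ sH ξ ^ ((α - 2) / 2) * (k / 2 * f ξ ^ 2 + 2 / k * (sH ξ * hgradSq f ξ)) :=
            mul_le_mul_of_nonneg_left hsuff hsβ
        _ = k / 2 * Wf α f ξ + 2 / k * Qf α f ξ := by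
            rw [Wf, Qf, hsα]
            ring
    · have hD2 : (DD f ξ) ^ 2 = 0 := le_antisymm (by rw [← h] at hb; simpa using hb) (sq_nonneg _)
      have hD0 : DD f ξ = 0 := by
        exact pow_eq_zero_iff (two_ne_zero) |>.1 hD2
      have hP0 : Pf α f ξ = 0 := by simp [Pf, hD0]
      rw [hP0, abs_zero]
      exact add_nonneg (mul_nonneg (by positivity) (hWnn ξ)) (mul_nonneg (by positivity) (hQnn ξ))
  -- integral estimates
  have hA : 0 ≤ ∫ ξ : Heis m, Wf α f ξ := integral_nonneg hWnn
  have hB : 0 ≤ ∫ ξ : Heis m, Qf α f ξ := integral_nonneg hQnn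
  have h6 : k * (∫ ξ : Heis m, Wf α f ξ)
      ≤ k / 2 * (∫ ξ : Heis m, Wf α f ξ) + 2 / k * (∫ ξ : Heis m, Qf α f ξ) := by
    have e1 : |∫ ξ : Heis m, Pf α f ξ| = k * (∫ ξ : Heis m, Wf α f ξ) := by
      rw [show (∫ ξ : Heis m, Pf α f ξ) = -(c * ∫ ξ : Heis m, Wf α f ξ) by linarith,
        abs_neg, abs_mul, abs_of_nonneg hA]
    have e2 : |∫ ξ : Heis m, Pf α f ξ| ≤ ∫ ξ : Heis m, |Pf α f ξ| := by
      simpa [Real.norm_eq_abs] using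
        norm_integral_le_integral_norm (μ := (volume : Measure (Heis m))) (Pf α f)
    have e3 : (∫ ξ : Heis m, |Pf α f ξ|)
        ≤ ∫ ξ : Heis m, (k / 2 * Wf α f ξ + 2 / k * Qf α f ξ) :=
      integral_mono hPint.abs ((hWint.const_mul (k / 2)).add (hQint.const_mul (2 / k))) hbound
    have e4 : (∫ ξ : Heis m, (k / 2 * Wf α f ξ + 2 / k * Qf α f ξ))
        = k / 2 * (∫ ξ : Heis m, Wf α f ξ) + 2 / k * (∫ ξ : Heis m, Qf α f ξ) := by
      rw [integral_add (hWint.const_mul (k / 2)) (hQint.const_mul (2 / k)),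
        integral_const_mul, integral_const_mul]
    linarith
  have h7 : k / 2 * (∫ ξ : Heis m, Wf α f ξ) ≤ 2 / k * (∫ ξ : Heis m, Qf α f ξ) := by
    linarith
  have h8 : (∫ ξ : Heis m, Wf α f ξ) ≤ (2 / c) ^ 2 * ∫ ξ : Heis m, Qf α f ξ := by
    have h9 := mul_le_mul_of_nonneg_left h7 (le_of_lt (by positivity : (0 : ℝ) < 2 / k))
    have e5 : 2 / k * (k / 2 * (∫ ξ : Heis m, Wf α f ξ)) = ∫ ξ : Heis m, Wf α f ξ := by
      field_simp
    have e6 : 2 / k * (2 / k * (∫ ξ : Heis m, Qf α f ξ))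
        = (2 / c) ^ 2 * ∫ ξ : Heis m, Qf α f ξ := by
      rw [div_pow, show c ^ 2 = k ^ 2 by rw [hk_def, sq_abs]]
      field_simp
    calc (∫ ξ : Heis m, Wf α f ξ)
        = 2 / k * (k / 2 * (∫ ξ : Heis m, Wf α f ξ)) := e5.symm
      _ ≤ 2 / k * (2 / k * (∫ ξ : Heis m, Qf α f ξ)) := h9
      _ = (2 / c) ^ 2 * ∫ ξ : Heis m, Qf α f ξ := e6
  -- rewrite the goal
  have hsqrtpow : ∀ (ξ : Heis m) (γ : ℝ),
      Real.sqrt (‖ξ.1‖ ^ 2 + ‖ξ.2.1‖ ^ 2) ^ γ = sH ξ ^ (γ / 2) := by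
    intro ξ γ
    rw [sH_eq ξ, Real.sqrt_eq_rpow, ← Real.rpow_mul (sH_nonneg ξ)]
    congr 1
    ring
  have e7 : (∫ ξ : Heis m, Real.sqrt (‖ξ.1‖ ^ 2 + ‖ξ.2.1‖ ^ 2) ^ (α - 2) * (f ξ) ^ 2)
      = ∫ ξ : Heis m, Wf α f ξ :=
    integral_congr_ae (Filter.Eventually.of_forall fun ξ => by beta_reduce; rw [hsqrtpow ξ (α - 2)]; rfl)
  have e8 : (∫ ξ : Heis m, Real.sqrt (‖ξ.1‖ ^ 2 + ‖ξ.2.1‖ ^ 2) ^ α * hgradSq f ξ)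
      = ∫ ξ : Heis m, Qf α f ξ :=
    integral_congr_ae (Filter.Eventually.of_forall fun ξ => by beta_reduce; rw [hsqrtpow ξ α]; rfl)
  rw [e7, e8]
  exact h8
end
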